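/- arXiv:1710.10927 — 6 statements merged into one kernel-verified Lean document; each statement's English description precedes it below -/
import Mathlib

section
/- Let A be an equivalence structure on ℕ with bounded character, finitely many infinite equivalence classes, and infinitely many finite equivalence classes, and let n be the largest size such that A has infinitely many equivalence classes of size exactly n. Then an equivalence structure B on ℕ is bi-embeddable with A if and only if: (i) B has exactly the same (finite) number of infinite equivalence classes as A; (ii) B has infinitely many equivalence classes of size exactly n; and (iii) for every m > n, B has exactly as many equivalence classes of size exactly m as A does. -/
/-- The equivalence class of `a` under the relation `E`. -/
def classOf (E : ℕ → ℕ → Prop) (a : ℕ) : Set ℕ := {x | E x a}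

/-- `f` is an embedding of the equivalence structure `(ℕ, E)` into `(ℕ, E')`. -/
def IsEmb (E E' : ℕ → ℕ → Prop) (f : ℕ → ℕ) : Prop :=
  Function.Injective f ∧ ∀ x y, E x y ↔ E' (f x) (f y)

/-- Bi-embeddability of equivalence structures on ℕ. -/
def BiEmb (E E' : ℕ → ℕ → Prop) : Prop :=
  (∃ f, IsEmb E E' f) ∧ (∃ g, IsEmb E' E g)

/-- `E` is a computable (decidable by a total computable function) binary relation. -/
def CompRelNat (E : ℕ → ℕ → Prop) : Prop :=
  ∃ f : ℕ → ℕ → Bool, Computable₂ f ∧ ∀ x y, E x y ↔ f x y = true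

/-- The collection of infinite equivalence classes of `E`. -/
def InfClasses (E : ℕ → ℕ → Prop) : Set (Set ℕ) :=
  {C | (∃ a, C = classOf E a) ∧ C.Infinite}

/-- The collection of equivalence classes of `E` of size exactly `m`. -/
def sizeClasses (E : ℕ → ℕ → Prop) (m : ℕ) : Set (Set ℕ) :=
  {C | (∃ a, C = classOf E a) ∧ C.Finite ∧ C.ncard = m}

/-- `E` has bounded character: some `k` bounds the size of every finite class. -/
def BoundedCharacter (E : ℕ → ℕ → Prop) : Prop :=
  ∃ k, ∀ a, (classOf E a).Finite → (classOf E a).ncard ≤ k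

/-- `E` has unbounded character: finite classes of arbitrarily large size. -/
def UnboundedCharacter (E : ℕ → ℕ → Prop) : Prop :=
  ∀ k, ∃ a, (classOf E a).Finite ∧ k < (classOf E a).ncard

/-- `E` is computably bi-embeddably categorical. -/
def CompBiembCat (E : ℕ → ℕ → Prop) : Prop :=
  ∀ E' : ℕ → ℕ → Prop, Equivalence E' → CompRelNat E' → BiEmb E E' →
    (∃ f, Computable f ∧ IsEmb E E' f) ∧ (∃ g, Computable g ∧ IsEmb E' E g)

/-- `f` is an isomorphism of `(ℕ, E)` onto `(ℕ, E')`. -/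
def IsIso (E E' : ℕ → ℕ → Prop) (f : ℕ → ℕ) : Prop :=
  Function.Bijective f ∧ ∀ x y, E x y ↔ E' (f x) (f y)

/-- `E` is computably categorical. -/
def CompCat (E : ℕ → ℕ → Prop) : Prop :=
  ∀ E' : ℕ → ℕ → Prop, Equivalence E' → CompRelNat E' → (∃ f, IsIso E' E f) →
    ∃ f, Computable f ∧ IsIso E' E f

/-- `W e` is the domain of the `e`-th partial computable function. -/
def W (e : ℕ) : Set ℕ :=
  {x | ((Denumerable.ofNat Nat.Partrec.Code e).eval x).Dom}
section stmt5helpers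

def bigClasses (E : ℕ → ℕ → Prop) (t : ℕ) : Set (Set ℕ) :=
  {C | (∃ a, C = classOf E a) ∧ (C.Infinite ∨ (C.Finite ∧ t ≤ C.ncard))}

variable {E E' : ℕ → ℕ → Prop}

lemma self_mem_classOf (hE : Equivalence E) (a : ℕ) : a ∈ classOf E a := hE.refl a

lemma classOf_eq_iff (hE : Equivalence E) {x y : ℕ} :
    classOf E x = classOf E y ↔ E x y := by
  constructor
  · intro h
    have : x ∈ classOf E y := h ▸ self_mem_classOf hE x
    exact this
  · intro h; ext z
    exact ⟨fun hz => hE.trans hz h, fun hz => hE.trans hz (hE.symm h)⟩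

lemma exists_injOn {α β : Type} [Nonempty β] (S : Set α) (T : Set β)
    (h : (S.Countable ∧ T.Infinite) ∨ (S.Finite ∧ T.Finite ∧ S.ncard ≤ T.ncard)) :
    ∃ g : α → β, Set.InjOn g S ∧ Set.MapsTo g S T := by
  have hne : Nonempty (S ↪ T) := by
    rcases h with ⟨hc, hi⟩ | ⟨hS, hT, hle⟩
    · rw [← Cardinal.le_def]
      exact le_trans hc.le_aleph0 (Cardinal.infinite_iff.mp hi.to_subtype)
    · have := hS.fintype; have := hT.fintype
      rw [Set.ncard_eq_toFinset_card', Set.ncard_eq_toFinset_card'] at hle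
      exact Function.Embedding.nonempty_of_card_le (by simpa using hle)
  obtain ⟨e⟩ := hne
  classical
  refine ⟨fun a => if h : a ∈ S then (e ⟨a, h⟩ : β) else Classical.arbitrary β, ?_, ?_⟩
  · intro a ha b hb hab
    simp only [dif_pos ha, dif_pos hb] at hab
    exact congrArg Subtype.val (e.injective (Subtype.ext hab))
  · intro a ha
    simp only [dif_pos ha]
    exact (e ⟨a, ha⟩).2

lemma exists_emb_of_classMap (hE : Equivalence E) (hE' : Equivalence E')
    (Ψ : Set ℕ → Set ℕ)
    (hcl : ∀ a, ∃ b, Ψ (classOf E a) = classOf E' b)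
    (hinj : ∀ a b, Ψ (classOf E a) = Ψ (classOf E b) → E a b)
    (hsz : ∀ a, (Ψ (classOf E a)).Infinite ∨
      ((classOf E a).Finite ∧ (Ψ (classOf E a)).Finite ∧
        (classOf E a).ncard ≤ (Ψ (classOf E a)).ncard)) :
    ∃ f, IsEmb E E' f := by
  classical
  have hex : ∀ a, ∃ g : ℕ → ℕ, Set.InjOn g (classOf E a) ∧
      Set.MapsTo g (classOf E a) (Ψ (classOf E a)) := by
    intro a
    apply exists_injOn
    rcases hsz a with h | ⟨h1, h2, h3⟩
    · exact Or.inl ⟨(classOf E a).to_countable, h⟩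
    · exact Or.inr ⟨h1, h2, h3⟩
  set J : Set ℕ → Set ℕ → (ℕ → ℕ) := fun S T =>
    if h : ∃ g : ℕ → ℕ, Set.InjOn g S ∧ Set.MapsTo g S T then h.choose else id with hJ
  set f : ℕ → ℕ := fun x => J (classOf E x) (Ψ (classOf E x)) x with hf
  have hspec : ∀ a, Set.InjOn (J (classOf E a) (Ψ (classOf E a))) (classOf E a) ∧
      Set.MapsTo (J (classOf E a) (Ψ (classOf E a))) (classOf E a) (Ψ (classOf E a)) := by
    intro a
    rw [hJ]
    simp only [dif_pos (hex a)]
    exact (hex a).choose_spec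
  have hmem : ∀ a, f a ∈ Ψ (classOf E a) := fun a =>
    (hspec a).2 (self_mem_classOf hE a)
  have hΨ : ∀ a, Ψ (classOf E a) = classOf E' (f a) := by
    intro a
    obtain ⟨b, hb⟩ := hcl a
    have : E' (f a) b := by have := hmem a; rw [hb] at this; exact this
    rw [hb, classOf_eq_iff hE' |>.mpr this]
  have key : ∀ x y, E x y ↔ E' (f x) (f y) := by
    intro x y
    constructor
    · intro h
      have hc : classOf E x = classOf E y := (classOf_eq_iff hE).mpr h
      have : classOf E' (f x) = classOf E' (f y) := by rw [← hΨ, ← hΨ, hc]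
      exact (classOf_eq_iff hE').mp this
    · intro h
      apply hinj
      rw [hΨ x, hΨ y]
      exact (classOf_eq_iff hE').mpr h
  refine ⟨f, ?_, key⟩
  intro x y hxy
  have hE'fxy : E' (f x) (f y) := hxy ▸ hE'.refl (f x)
  have hxyE : E x y := (key x y).mpr hE'fxy
  have hc : classOf E x = classOf E y := (classOf_eq_iff hE).mpr hxyE
  have hx : x ∈ classOf E x := self_mem_classOf hE x
  have hy : y ∈ classOf E x := hE.symm hxyE
  exact (hspec x).1 hx hy (by rw [hf] at hxy; simpa only [← hc] using hxy)

lemma exists_emb_side (hE : Equivalence E) (hE' : Equivalence E') (n : ℕ)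
    (hinfE : (InfClasses E).Finite) (hinfE' : (InfClasses E').Finite)
    (hcard : (InfClasses E).ncard ≤ (InfClasses E').ncard)
    (hn' : (sizeClasses E' n).Infinite)
    (hm : ∀ m, n < m → (sizeClasses E m).Finite ∧ (sizeClasses E' m).Finite ∧
      (sizeClasses E m).ncard ≤ (sizeClasses E' m).ncard) :
    ∃ f, IsEmb E E' f := by
  classical
  obtain ⟨φI, hφI_inj, hφI_map⟩ := exists_injOn (InfClasses E) (InfClasses E')
    (Or.inr ⟨hinfE, hinfE', hcard⟩)
  obtain ⟨φS, hφS_inj, hφS_map⟩ := exists_injOn (Set.range (classOf E)) (sizeClasses E' n)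
    (Or.inl ⟨Set.countable_range _, hn'⟩)
  set φF : ℕ → Set ℕ → Set ℕ := fun m =>
    if h : n < m then
      (exists_injOn (sizeClasses E m) (sizeClasses E' m)
        (Or.inr ⟨(hm m h).1, (hm m h).2.1, (hm m h).2.2⟩)).choose
    else id with hφF
  have hφF_spec : ∀ m, n < m → Set.InjOn (φF m) (sizeClasses E m) ∧
      Set.MapsTo (φF m) (sizeClasses E m) (sizeClasses E' m) := by
    intro m h
    rw [hφF]
    simp only [dif_pos h]
    exact (exists_injOn (sizeClasses E m) (sizeClasses E' m)
      (Or.inr ⟨(hm m h).1, (hm m h).2.1, (hm m h).2.2⟩)).choose_spec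
  set Ψ : Set ℕ → Set ℕ := fun C =>
    if C.Infinite then φI C else if C.ncard ≤ n then φS C else φF C.ncard C with hΨ
  have hmemI : ∀ a, (classOf E a).Infinite → Ψ (classOf E a) ∈ InfClasses E' := by
    intro a h; rw [hΨ]; simp only [if_pos h]; exact hφI_map ⟨⟨a, rfl⟩, h⟩
  have hmemS : ∀ a, ¬(classOf E a).Infinite → (classOf E a).ncard ≤ n →
      Ψ (classOf E a) ∈ sizeClasses E' n := by
    intro a h hle; rw [hΨ]; simp only [if_neg h, if_pos hle]
    exact hφS_map ⟨a, rfl⟩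
  have hmemF : ∀ a, ¬(classOf E a).Infinite → ¬((classOf E a).ncard ≤ n) →
      Ψ (classOf E a) ∈ sizeClasses E' (classOf E a).ncard := by
    intro a h hle; rw [hΨ]; simp only [if_neg h, if_neg hle]
    exact (hφF_spec _ (lt_of_not_ge hle)).2 ⟨⟨a, rfl⟩, Set.not_infinite.mp h, rfl⟩
  apply exists_emb_of_classMap hE hE' Ψ
  · intro a
    by_cases h1 : (classOf E a).Infinite
    · exact ((hmemI a h1).1)
    by_cases h2 : (classOf E a).ncard ≤ n
    · exact ((hmemS a h1 h2).1)
    · exact ((hmemF a h1 h2).1)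
  · intro a b hab
    by_cases h1a : (classOf E a).Infinite <;> by_cases h1b : (classOf E b).Infinite
    · have := hφI_inj ⟨⟨a, rfl⟩, h1a⟩ ⟨⟨b, rfl⟩, h1b⟩ (by
        have : Ψ (classOf E a) = Ψ (classOf E b) := hab
        rw [hΨ] at this; simpa only [if_pos h1a, if_pos h1b] using this)
      exact (classOf_eq_iff hE).mp this
    · exfalso
      have ha' := hmemI a h1a
      by_cases h2b : (classOf E b).ncard ≤ n
      · have hb' := hmemS b h1b h2b
        exact absurd (hab ▸ ha'.2) hb'.2.1.not_infinite
      · have hb' := hmemF b h1b h2b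
        exact absurd (hab ▸ ha'.2) hb'.2.1.not_infinite
    · exfalso
      have hb' := hmemI b h1b
      by_cases h2a : (classOf E a).ncard ≤ n
      · have ha' := hmemS a h1a h2a
        exact absurd (hab ▸ hb'.2) ha'.2.1.not_infinite
      · have ha' := hmemF a h1a h2a
        exact absurd (hab ▸ hb'.2) ha'.2.1.not_infinite
    · by_cases h2a : (classOf E a).ncard ≤ n <;> by_cases h2b : (classOf E b).ncard ≤ n
      · have := hφS_inj ⟨a, rfl⟩ ⟨b, rfl⟩ (by
          have : Ψ (classOf E a) = Ψ (classOf E b) := hab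
          rw [hΨ] at this; simpa only [if_neg h1a, if_neg h1b, if_pos h2a, if_pos h2b] using this)
        exact (classOf_eq_iff hE).mp this
      · exfalso
        have ha' := hmemS a h1a h2a
        have hb' := hmemF b h1b h2b
        have : n = (classOf E b).ncard := by rw [← ha'.2.2, hab, hb'.2.2]
        exact h2b this.ge
      · exfalso
        have ha' := hmemF a h1a h2a
        have hb' := hmemS b h1b h2b
        have : (classOf E a).ncard = n := by rw [← ha'.2.2, hab, hb'.2.2]
        exact h2a this.le
      · have ha' := hmemF a h1a h2a
        have hb' := hmemF b h1b h2b
        have hmm : (classOf E a).ncard = (classOf E b).ncard := by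
          rw [← ha'.2.2, hab, hb'.2.2]
        have := (hφF_spec _ (lt_of_not_ge h2a)).1
          (show classOf E a ∈ sizeClasses E _ from ⟨⟨a, rfl⟩, Set.not_infinite.mp h1a, rfl⟩)
          (show classOf E b ∈ sizeClasses E _ from ⟨⟨b, rfl⟩, Set.not_infinite.mp h1b, hmm.symm⟩)
          (by
            have : Ψ (classOf E a) = Ψ (classOf E b) := hab
            rw [hΨ] at this
            simpa only [if_neg h1a, if_neg h1b, if_neg h2a, if_neg h2b, ← hmm] using this)
        exact (classOf_eq_iff hE).mp this
  · intro a
    by_cases h1 : (classOf E a).Infinite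
    · exact Or.inl (hmemI a h1).2
    by_cases h2 : (classOf E a).ncard ≤ n
    · have h' := hmemS a h1 h2
      exact Or.inr ⟨Set.not_infinite.mp h1, h'.2.1, h'.2.2 ▸ h2⟩
    · have h' := hmemF a h1 h2
      exact Or.inr ⟨Set.not_infinite.mp h1, h'.2.1, h'.2.2.ge⟩

/-- The induced map on classes of an embedding. -/
noncomputable def classMap (E' : ℕ → ℕ → Prop) (f : ℕ → ℕ) (C : Set ℕ) : Set ℕ :=
  classOf E' (f (sInf C))

lemma sInf_mem_classOf (hE : Equivalence E) (a : ℕ) :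
    sInf (classOf E a) ∈ classOf E a :=
  Nat.sInf_mem ⟨a, self_mem_classOf hE a⟩

lemma classMap_eq (hE : Equivalence E) (hE' : Equivalence E') {f : ℕ → ℕ}
    (hf : IsEmb E E' f) (a : ℕ) :
    classMap E' f (classOf E a) = classOf E' (f a) := by
  have h := sInf_mem_classOf hE a
  exact (classOf_eq_iff hE').mpr ((hf.2 _ _).mp h)

lemma classMap_injOn (hE : Equivalence E) (hE' : Equivalence E') {f : ℕ → ℕ}
    (hf : IsEmb E E' f) {a b : ℕ}
    (h : classMap E' f (classOf E a) = classMap E' f (classOf E b)) :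
    classOf E a = classOf E b := by
  rw [classMap_eq hE hE' hf, classMap_eq hE hE' hf, classOf_eq_iff hE'] at h
  exact (classOf_eq_iff hE).mpr ((hf.2 a b).mpr h)

lemma classMap_mapsTo (hE : Equivalence E) (hE' : Equivalence E') {f : ℕ → ℕ}
    (hf : IsEmb E E' f) (a : ℕ) :
    Set.MapsTo f (classOf E a) (classMap E' f (classOf E a)) := by
  rw [classMap_eq hE hE' hf]
  intro x hx
  exact (hf.2 x a).mp hx

lemma classMap_infinite (hE : Equivalence E) (hE' : Equivalence E') {f : ℕ → ℕ}
    (hf : IsEmb E E' f) {a : ℕ} (h : (classOf E a).Infinite) :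
    (classMap E' f (classOf E a)).Infinite := by
  have him : (f '' classOf E a).Infinite := h.image (hf.1.injOn)
  exact him.mono ((classMap_mapsTo hE hE' hf a).image_subset)

lemma classMap_ncard_le (hE : Equivalence E) (hE' : Equivalence E') {f : ℕ → ℕ}
    (hf : IsEmb E E' f) {a : ℕ} (h : (classMap E' f (classOf E a)).Finite) :
    (classOf E a).Finite ∧ (classOf E a).ncard ≤ (classMap E' f (classOf E a)).ncard := by
  have hfin : (classOf E a).Finite := by
    by_contra hc
    exact (classMap_infinite hE hE' hf hc) h
  refine ⟨hfin, ?_⟩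
  exact Set.ncard_le_ncard_of_injOn f (classMap_mapsTo hE hE' hf a) (hf.1.injOn) h

lemma classMap_big (hE : Equivalence E) (hE' : Equivalence E') {f : ℕ → ℕ}
    (hf : IsEmb E E' f) (t : ℕ) :
    Set.MapsTo (classMap E' f) (bigClasses E t) (bigClasses E' t) := by
  rintro C ⟨⟨a, rfl⟩, hbig⟩
  refine ⟨⟨f (sInf (classOf E a)), rfl⟩, ?_⟩
  rcases hbig with hinf | ⟨hfin, hle⟩
  · exact Or.inl (classMap_infinite hE hE' hf hinf)
  · by_cases hF : (classMap E' f (classOf E a)).Finite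
    · exact Or.inr ⟨hF, le_trans hle (classMap_ncard_le hE hE' hf hF).2⟩
    · exact Or.inl hF

lemma classMap_injOn_set (hE : Equivalence E) (hE' : Equivalence E') {f : ℕ → ℕ}
    (hf : IsEmb E E' f) {S : Set (Set ℕ)} (hS : ∀ C ∈ S, ∃ a, C = classOf E a) :
    Set.InjOn (classMap E' f) S := by
  intro C hC D hD h
  obtain ⟨a, rfl⟩ := hS C hC
  obtain ⟨b, rfl⟩ := hS D hD
  exact classMap_injOn hE hE' hf h

lemma bigClasses_antitone (E : ℕ → ℕ → Prop) {s t : ℕ} (h : s ≤ t) :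
    bigClasses E t ⊆ bigClasses E s := by
  rintro C ⟨h1, hinf | ⟨hfin, hle⟩⟩
  · exact ⟨h1, Or.inl hinf⟩
  · exact ⟨h1, Or.inr ⟨hfin, le_trans h hle⟩⟩

lemma sizeClasses_eq_diff (E : ℕ → ℕ → Prop) (m : ℕ) :
    sizeClasses E m = bigClasses E m \ bigClasses E (m + 1) := by
  ext C
  constructor
  · rintro ⟨h1, h2, h3⟩
    refine ⟨⟨h1, Or.inr ⟨h2, h3.ge⟩⟩, ?_⟩
    rintro ⟨-, hinf | ⟨-, hle⟩⟩
    · exact hinf h2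
    · omega
  · rintro ⟨⟨h1, hinf | ⟨hfin, hle⟩⟩, hnot⟩
    · exact absurd ⟨h1, Or.inl hinf⟩ hnot
    · refine ⟨h1, hfin, ?_⟩
      by_contra hne
      exact hnot ⟨h1, Or.inr ⟨hfin, by omega⟩⟩

end stmt5helpers
/-- Characterization of the bi-embeddability type of an equivalence structure with
bounded character, finitely many infinite classes and infinitely many finite classes,
where `n` is the largest size occurring in infinitely many classes. -/
theorem stmt5 (A B : ℕ → ℕ → Prop) (hA : Equivalence A) (hB : Equivalence B)
    (hbc : BoundedCharacter A)
    (hinfA : (InfClasses A).Finite)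
    (hfinA : {C : Set ℕ | (∃ a, C = classOf A a) ∧ C.Finite}.Infinite)
    (n : ℕ) (hn : (sizeClasses A n).Infinite)
    (hnmax : ∀ m, n < m → (sizeClasses A m).Finite) :
    BiEmb A B ↔
      ((InfClasses B).Finite ∧ (InfClasses B).ncard = (InfClasses A).ncard) ∧
      (sizeClasses B n).Infinite ∧
      (∀ m, n < m → (sizeClasses B m).Finite ∧
        (sizeClasses B m).ncard = (sizeClasses A m).ncard) := by
  constructor
  · rintro ⟨⟨f, hf⟩, ⟨g, hg⟩⟩
    classical
    obtain ⟨k, hk⟩ := hbc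
    have hbigA : ∀ t, n < t → (bigClasses A t).Finite := by
      intro t ht
      apply Set.Finite.subset (Set.Finite.union hinfA
        ((Set.finite_Ioc n k).biUnion (fun m hm => hnmax m (Set.mem_Ioc.mp hm).1)))
      rintro C ⟨⟨a, rfl⟩, hinf | ⟨hfin, hle⟩⟩
      · exact Or.inl ⟨⟨a, rfl⟩, hinf⟩
      · exact Or.inr (Set.mem_biUnion
          (Set.mem_Ioc.mpr ⟨lt_of_lt_of_le ht hle, hk a hfin⟩) ⟨⟨a, rfl⟩, hfin, rfl⟩)
    have hbigB : ∀ t, n < t → (bigClasses B t).Finite := by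
      intro t ht
      exact Set.Finite.of_finite_image
        (Set.Finite.subset (hbigA t ht) ((classMap_big hB hA hg t).image_subset))
        (classMap_injOn_set hB hA hg (fun C hC => hC.1))
    have hncard : ∀ t, n < t → (bigClasses A t).ncard = (bigClasses B t).ncard := by
      intro t ht
      refine le_antisymm ?_ ?_
      · exact Set.ncard_le_ncard_of_injOn (classMap B f) (classMap_big hA hB hf t)
          (classMap_injOn_set hA hB hf (fun C hC => hC.1)) (hbigB t ht)
      · exact Set.ncard_le_ncard_of_injOn (classMap A g) (classMap_big hB hA hg t)
          (classMap_injOn_set hB hA hg (fun C hC => hC.1)) (hbigA t ht)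
    set SS : Finset (Set ℕ) :=
      (hbigA (n+1) (lt_add_one n)).toFinset ∪ (hbigB (n+1) (lt_add_one n)).toFinset with hSS
    set T : ℕ := SS.sup Set.ncard + n + 1 with hT
    have hTn : n < T := by omega
    have hinfeq : ∀ (E : ℕ → ℕ → Prop), (∀ C ∈ bigClasses E (n+1), C ∈ SS) →
        InfClasses E = bigClasses E T := by
      intro E hsup
      ext C
      constructor
      · rintro ⟨h1, h2⟩; exact ⟨h1, Or.inl h2⟩
      · rintro ⟨h1, hinf | ⟨hfin, hle⟩⟩
        · exact ⟨h1, hinf⟩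
        · exfalso
          have hC : C ∈ bigClasses E (n+1) := ⟨h1, Or.inr ⟨hfin, by omega⟩⟩
          have := Finset.le_sup (f := Set.ncard) (hsup C hC)
          omega
    have hmemA : ∀ C ∈ bigClasses A (n+1), C ∈ SS := fun C hC =>
      Finset.mem_union_left _ ((hbigA (n+1) (lt_add_one n)).mem_toFinset.mpr hC)
    have hmemB : ∀ C ∈ bigClasses B (n+1), C ∈ SS := fun C hC =>
      Finset.mem_union_right _ ((hbigB (n+1) (lt_add_one n)).mem_toFinset.mpr hC)
    have hIA := hinfeq A hmemA
    have hIB := hinfeq B hmemB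
    refine ⟨⟨?_, ?_⟩, ?_, ?_⟩
    · rw [hIB]; exact hbigB T hTn
    · rw [hIA, hIB, hncard T hTn]
    · by_contra hcon
      rw [Set.not_infinite] at hcon
      apply hn
      apply Set.Finite.of_finite_image ?_ (classMap_injOn_set hA hB hf (fun C hC => hC.1))
      apply Set.Finite.subset (hcon.union (hbigB (n+1) (lt_add_one n)))
      rintro _ ⟨C, hC, rfl⟩
      obtain ⟨⟨a, rfl⟩, hfin, hcard⟩ := hC
      by_cases hF : (classMap B f (classOf A a)).Finite
      · have hle := (classMap_ncard_le hA hB hf hF).2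
        by_cases hEq : (classMap B f (classOf A a)).ncard = n
        · exact Or.inl ⟨⟨_, rfl⟩, hF, hEq⟩
        · exact Or.inr ⟨⟨_, rfl⟩, Or.inr ⟨hF, by omega⟩⟩
      · exact Or.inr ⟨⟨_, rfl⟩, Or.inl hF⟩
    · intro m hm
      have hfin : (sizeClasses B m).Finite := by
        rw [sizeClasses_eq_diff]
        exact (hbigB m hm).subset Set.diff_subset
      refine ⟨hfin, ?_⟩
      rw [sizeClasses_eq_diff, sizeClasses_eq_diff,
        Set.ncard_diff (bigClasses_antitone B (Nat.le_succ m)) (hbigB (m+1) (by omega)),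
        Set.ncard_diff (bigClasses_antitone A (Nat.le_succ m)) (hbigA (m+1) (by omega)),
        ← hncard m hm, ← hncard (m+1) (by omega)]
  · rintro ⟨⟨hBfin, hBcard⟩, hBn, hBm⟩
    constructor
    · exact exists_emb_side hA hB n hinfA hBfin hBcard.ge hBn
        (fun m hm => ⟨hnmax m hm, (hBm m hm).1, ((hBm m hm).2).ge⟩)
    · exact exists_emb_side hB hA n hBfin hinfA hBcard.le hn
        (fun m hm => ⟨(hBm m hm).1, hnmax m hm, ((hBm m hm).2).le⟩)
end

section
/- If A and B are equivalence structures on ℕ that both have unbounded character (finite equivalence classes of arbitrarily large size) and both have the same finite number of infinite equivalence classes, then A and B are bi-embeddable. -/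
section Aux

variable {A B : ℕ → ℕ → Prop}

lemma classOf_eq_of_rel (hA : Equivalence A) {x y : ℕ} (h : A x y) :
    classOf A x = classOf A y := by
  ext z
  exact ⟨fun hz => hA.trans hz h, fun hz => hA.trans hz (hA.symm h)⟩

lemma rel_of_classOf_eq (hA : Equivalence A) {x y : ℕ}
    (h : classOf A x = classOf A y) : A x y := by
  have : x ∈ classOf A y := h ▸ (hA.refl x : x ∈ classOf A x)
  exact this

/-- Abstract assignment lemma: an injective class-invariant assignment of
`B`-classes to `A`-classes with embeddings yields an embedding. -/
lemma emb_of_assignment (hA : Equivalence A) (hB : Equivalence B)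
    (T : ℕ → Set ℕ)
    (hTcls : ∀ x, ∃ b, T x = classOf B b)
    (hTcongr : ∀ x y, classOf A x = classOf A y → T x = T y)
    (hTinj : ∀ x y, T x = T y → classOf A x = classOf A y)
    (hTemb : ∀ x, Nonempty (↥(classOf A x) ↪ ↥(T x))) :
    ∃ f, IsEmb A B f := by
  classical
  set rep : ℕ → ℕ := fun x => sInf {a | classOf A a = classOf A x} with hrepdef
  have hrepcls : ∀ x, classOf A (rep x) = classOf A x := fun x =>
    Nat.sInf_mem (⟨x, rfl⟩ : {a | classOf A a = classOf A x}.Nonempty)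
  have hrepcongr : ∀ x y, classOf A x = classOf A y → rep x = rep y := by
    intro x y h
    simp only [hrepdef, h]
  set j : ∀ r : ℕ, (↥(classOf A r) ↪ ↥(T r)) := fun r => (hTemb r).some with hjdef
  set g : ℕ → ℕ → ℕ := fun r z => if h : z ∈ classOf A r then (j r ⟨z, h⟩ : ℕ) else 0
    with hgdef
  have hgmem : ∀ r z (h : z ∈ classOf A r), g r z ∈ T r := by
    intro r z h
    simp only [hgdef, dif_pos h]
    exact (j r ⟨z, h⟩).2
  have hginj : ∀ r z w, z ∈ classOf A r → w ∈ classOf A r → g r z = g r w → z = w := by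
    intro r z w hz hw h
    simp only [hgdef, dif_pos hz, dif_pos hw] at h
    have := (j r).injective (Subtype.ext h)
    exact congrArg Subtype.val this
  refine ⟨fun x => g (rep x) x, ?_, ?_⟩
  · -- injectivity
    intro x y h
    change g (rep x) x = g (rep y) y at h
    have hx : x ∈ classOf A (rep x) := (hrepcls x).symm ▸ (hA.refl x : x ∈ classOf A x)
    have hy : y ∈ classOf A (rep y) := (hrepcls y).symm ▸ (hA.refl y : y ∈ classOf A y)
    obtain ⟨bx, hbx⟩ := hTcls x
    obtain ⟨by', hby⟩ := hTcls y
    have hmx : g (rep x) x ∈ classOf B bx := by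
      have := hgmem (rep x) x hx
      rwa [hTcongr (rep x) x (hrepcls x), hbx] at this
    have hmy : g (rep y) y ∈ classOf B by' := by
      have := hgmem (rep y) y hy
      rwa [hTcongr (rep y) y (hrepcls y), hby] at this
    have hbb : B bx by' := hB.trans (hB.symm hmx) (h ▸ hmy)
    have hTT : T x = T y := by rw [hbx, hby]; exact classOf_eq_of_rel hB hbb
    have hcc : classOf A x = classOf A y := hTinj x y hTT
    have hrr : rep x = rep y := hrepcongr x y hcc
    rw [hrr] at h hx
    exact hginj (rep y) x y hx hy h
  · -- relation preservation
    intro x y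
    have hx : x ∈ classOf A (rep x) := (hrepcls x).symm ▸ (hA.refl x : x ∈ classOf A x)
    have hy : y ∈ classOf A (rep y) := (hrepcls y).symm ▸ (hA.refl y : y ∈ classOf A y)
    obtain ⟨bx, hbx⟩ := hTcls x
    obtain ⟨by', hby⟩ := hTcls y
    have hmx : g (rep x) x ∈ classOf B bx := by
      have := hgmem (rep x) x hx
      rwa [hTcongr (rep x) x (hrepcls x), hbx] at this
    have hmy : g (rep y) y ∈ classOf B by' := by
      have := hgmem (rep y) y hy
      rwa [hTcongr (rep y) y (hrepcls y), hby] at this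
    constructor
    · intro hxy
      have hcc : classOf A x = classOf A y := classOf_eq_of_rel hA hxy
      have : T x = T y := hTcongr x y hcc
      rw [hbx, hby] at this
      have hb : B bx by' := rel_of_classOf_eq hB this
      exact hB.trans hmx (hB.trans hb (hB.symm hmy))
    · intro hfxy
      have hbb : B bx by' := hB.trans (hB.symm hmx) (hB.trans hfxy hmy)
      have hTT : T x = T y := by rw [hbx, hby]; exact classOf_eq_of_rel hB hbb
      exact rel_of_classOf_eq hA (hTinj x y hTT)

/-- One direction of the bi-embedding. -/
lemma emb_exists (hA : Equivalence A) (hB : Equivalence B)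
    (hubB : UnboundedCharacter B)
    (hfinA : (InfClasses A).Finite) (hfinB : (InfClasses B).Finite)
    (hcard : (InfClasses A).ncard = (InfClasses B).ncard) :
    ∃ f, IsEmb A B f := by
  classical
  -- the sequence of large finite B-classes
  set pick : ℕ → ℕ := fun k => (hubB k).choose with hpickdef
  have hpick : ∀ k, (classOf B (pick k)).Finite ∧ k < (classOf B (pick k)).ncard :=
    fun k => (hubB k).choose_spec
  set rs : ℕ → ℕ := fun n => Nat.rec (pick 0)
    (fun _ r => pick ((classOf B r).ncard)) n with hrsdef
  set D : ℕ → Set ℕ := fun n => classOf B (rs n) with hDdef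
  have hDfin : ∀ n, (D n).Finite := by
    intro n
    cases n with
    | zero => exact (hpick 0).1
    | succ m => exact (hpick _).1
  have hDstep : ∀ n, (D n).ncard < (D (n+1)).ncard := by
    intro n
    exact (hpick ((classOf B (rs n)).ncard)).2
  have hDmono : StrictMono (fun n => (D n).ncard) := strictMono_nat_of_lt_succ hDstep
  have hDlt : ∀ n, n < (D n).ncard := by
    intro n
    induction n with
    | zero => exact (hpick 0).2
    | succ m ih => exact lt_of_le_of_lt ih (hDstep m)
  have hDinj : Function.Injective D := by
    intro m n h
    exact hDmono.injective (by simp only [h])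
  have hDinf : ∀ n, ¬ (D n).Infinite := fun n h => h (hDfin n)
  -- bijection between infinite classes
  haveI : Fintype ↥(InfClasses A) := hfinA.fintype
  haveI : Fintype ↥(InfClasses B) := hfinB.fintype
  have hcards : Fintype.card ↥(InfClasses A) = Fintype.card ↥(InfClasses B) := by
    rw [← Nat.card_eq_fintype_card, ← Nat.card_eq_fintype_card,
      Nat.card_coe_set_eq, Nat.card_coe_set_eq]
    exact hcard
  obtain ⟨ψ⟩ : Nonempty (↥(InfClasses A) ≃ ↥(InfClasses B)) :=
    ⟨Fintype.equivOfCardEq hcards⟩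
  set rep : ℕ → ℕ := fun x => sInf {a | classOf A a = classOf A x} with hrepdef
  have hrepcongr : ∀ x y, classOf A x = classOf A y → rep x = rep y := by
    intro x y h; simp only [hrepdef, h]
  have hrepinj : ∀ x y, rep x = rep y → classOf A x = classOf A y := by
    intro x y h
    have hx : classOf A (rep x) = classOf A x :=
      Nat.sInf_mem (⟨x, rfl⟩ : {a | classOf A a = classOf A x}.Nonempty)
    have hy : classOf A (rep y) = classOf A y :=
      Nat.sInf_mem (⟨y, rfl⟩ : {a | classOf A a = classOf A y}.Nonempty)
    rw [← hx, ← hy, h]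
  -- the assignment
  refine emb_of_assignment hA hB
    (fun x => if h : (classOf A x).Infinite
      then (ψ ⟨classOf A x, ⟨x, rfl⟩, h⟩ : Set ℕ)
      else D (Nat.pair (rep x) ((classOf A x).ncard))) ?_ ?_ ?_ ?_
  · intro x
    by_cases h : (classOf A x).Infinite
    · simp only [dif_pos h]
      exact (ψ ⟨classOf A x, ⟨x, rfl⟩, h⟩).2.1
    · simp only [dif_neg h]
      exact ⟨rs _, rfl⟩
  · intro x y hxy
    by_cases h : (classOf A x).Infinite
    · have h' : (classOf A y).Infinite := hxy ▸ h
      simp only [dif_pos h, dif_pos h']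
      congr 1
      exact congrArg ψ (Subtype.ext hxy)
    · have h' : ¬ (classOf A y).Infinite := hxy ▸ h
      simp only [dif_neg h, dif_neg h', hrepcongr x y hxy, hxy]
  · intro x y hT
    by_cases h : (classOf A x).Infinite <;> by_cases h' : (classOf A y).Infinite
    · simp only [dif_pos h, dif_pos h'] at hT
      have : ψ ⟨classOf A x, ⟨x, rfl⟩, h⟩ = ψ ⟨classOf A y, ⟨y, rfl⟩, h'⟩ :=
        Subtype.ext hT
      have := ψ.injective this
      exact congrArg Subtype.val this
    · simp only [dif_pos h, dif_neg h'] at hT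
      exact absurd ((ψ ⟨classOf A x, ⟨x, rfl⟩, h⟩).2.2) (hT ▸ hDinf _)
    · simp only [dif_neg h, dif_pos h'] at hT
      exact absurd ((ψ ⟨classOf A y, ⟨y, rfl⟩, h'⟩).2.2) (hT.symm ▸ hDinf _)
    · simp only [dif_neg h, dif_neg h'] at hT
      have := Nat.pair_eq_pair.mp (hDinj hT)
      exact hrepinj x y this.1
  · intro x
    by_cases h : (classOf A x).Infinite
    · simp only [dif_pos h]
      have h2 : ((ψ ⟨classOf A x, ⟨x, rfl⟩, h⟩ : Set ℕ)).Infinite :=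
        (ψ ⟨classOf A x, ⟨x, rfl⟩, h⟩).2.2
      haveI : Infinite ↥(classOf A x) := h.to_subtype
      haveI : Infinite ↥(ψ ⟨classOf A x, ⟨x, rfl⟩, h⟩ : Set ℕ) := h2.to_subtype
      exact ⟨(nonempty_equiv_of_countable.some :
        ↥(classOf A x) ≃ ↥(ψ ⟨classOf A x, ⟨x, rfl⟩, h⟩ : Set ℕ)).toEmbedding⟩
    · simp only [dif_neg h]
      have hfin : (classOf A x).Finite := Set.not_infinite.mp h
      set n := Nat.pair (rep x) ((classOf A x).ncard) with hn
      have hle : (classOf A x).ncard ≤ (D n).ncard :=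
        le_of_lt (lt_of_le_of_lt (Nat.right_le_pair _ _) (hDlt n))
      haveI := hfin.fintype
      haveI := (hDfin n).fintype
      have hc : Fintype.card ↥(classOf A x) ≤ Fintype.card ↥(D n) := by
        rwa [← Nat.card_eq_fintype_card, ← Nat.card_eq_fintype_card,
          Nat.card_coe_set_eq, Nat.card_coe_set_eq]
      exact Function.Embedding.nonempty_of_card_le hc

end Aux


/-- Two equivalence structures with unbounded character and the same finite number
of infinite equivalence classes are bi-embeddable. -/
theorem stmt6 (A B : ℕ → ℕ → Prop) (hA : Equivalence A) (hB : Equivalence B)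
    (hubA : UnboundedCharacter A) (hubB : UnboundedCharacter B)
    (hfinA : (InfClasses A).Finite) (hfinB : (InfClasses B).Finite)
    (hcard : (InfClasses A).ncard = (InfClasses B).ncard) :
    BiEmb A B :=
  ⟨emb_exists hA hB hubB hfinA hfinB hcard,
   emb_exists hB hA hubA hfinB hfinA hcard.symm⟩
end

section
/- Any two equivalence structures on ℕ each having infinitely many infinite equivalence classes are bi-embeddable. -/
lemma emb_of_infB (A B : ℕ → ℕ → Prop) (hA : Equivalence A) (hB : Equivalence B)
    (hiB : (InfClasses B).Infinite) : ∃ f, IsEmb A B f := by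
  classical
  let s : Setoid ℕ := ⟨A, hA⟩
  haveI : Countable (Quotient s) := Quotient.countable
  haveI : Infinite ↥(InfClasses B) := hiB.to_subtype
  obtain ⟨e, he⟩ := (exists_injective_nat (Quotient s))
  let C : Quotient s → ↥(InfClasses B) := fun q => Infinite.natEmbedding _ (e q)
  have hCinj : Function.Injective C :=
    fun a b h => he ((Infinite.natEmbedding _).injective h)
  have key : ∀ a a' z w, z ∈ classOf B a → w ∈ classOf B a' → B z w →
      classOf B a = classOf B a' := by
    intro a a' z w hz hw hzw
    ext x
    simp only [classOf, Set.mem_setOf_eq] at *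
    have haa' : B a a' := hB.trans (hB.trans (hB.symm hz) hzw) hw
    exact ⟨fun h => hB.trans h haa', fun h => hB.trans h (hB.symm haa')⟩
  have hCq : ∀ q₁ q₂ z w, z ∈ (C q₁ : Set ℕ) → w ∈ (C q₂ : Set ℕ) → B z w → q₁ = q₂ := by
    intro q₁ q₂ z w hz hw hzw
    obtain ⟨a₁, ha₁⟩ := (C q₁).2.1
    obtain ⟨a₂, ha₂⟩ := (C q₂).2.1
    apply hCinj
    apply Subtype.ext
    rw [ha₁, ha₂]
    exact key a₁ a₂ z w (ha₁ ▸ hz) (ha₂ ▸ hw) hzw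
  have hsame : ∀ q z w, z ∈ (C q : Set ℕ) → w ∈ (C q : Set ℕ) → B z w := by
    intro q z w hz hw
    obtain ⟨a, ha⟩ := (C q).2.1
    rw [ha] at hz hw
    exact hB.trans hz (hB.symm hw)
  let g : Quotient s → ℕ → ℕ := fun q n => (Set.Infinite.natEmbedding _ (C q).2.2 n).1
  have hginj : ∀ q, Function.Injective (g q) :=
    fun q n m h => (Set.Infinite.natEmbedding _ (C q).2.2).injective (Subtype.ext h)
  have hgmem : ∀ q n, g q n ∈ (C q : Set ℕ) := fun q n => (Set.Infinite.natEmbedding _ (C q).2.2 n).2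
  refine ⟨fun x => g ⟦x⟧ x, ?_, ?_⟩
  · intro x y h
    simp only at h
    have hq : (⟦x⟧ : Quotient s) = ⟦y⟧ :=
      hCq _ _ _ _ (hgmem ⟦x⟧ x) (hgmem ⟦y⟧ y) (by rw [h]; exact hB.refl _)
    apply hginj ⟦x⟧
    rw [h, hq]
  · intro x y
    constructor
    · intro h
      have hq : (⟦x⟧ : Quotient s) = ⟦y⟧ := Quotient.sound h
      exact hsame ⟦x⟧ _ _ (hgmem ⟦x⟧ x) (hq ▸ hgmem ⟦y⟧ y)
    · intro h
      exact Quotient.exact (hCq _ _ _ _ (hgmem ⟦x⟧ x) (hgmem ⟦y⟧ y) h)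

/-- Any two equivalence structures with infinitely many infinite equivalence classes
are bi-embeddable. -/
theorem stmt7 (A B : ℕ → ℕ → Prop) (hA : Equivalence A) (hB : Equivalence B)
    (hiA : (InfClasses A).Infinite) (hiB : (InfClasses B).Infinite) :
    BiEmb A B :=
  ⟨emb_of_infB A B hA hB hiB, emb_of_infB B A hB hA hiA⟩
end

section
/- Every equivalence structure on ℕ is bi-embeddable with a computable equivalence structure. -/
namespace S9
open Set

noncomputable def rep (E : ℕ → ℕ → Prop) (a : ℕ) : ℕ := sInf (classOf E a)

variable {E E' : ℕ → ℕ → Prop}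

theorem mem_classOf {x a : ℕ} : x ∈ classOf E a ↔ E x a := Iff.rfl

theorem E_rep (hE : Equivalence E) (a : ℕ) : E (rep E a) a :=
  Nat.sInf_mem (⟨a, hE.refl a⟩ : (classOf E a).Nonempty)

theorem classOf_eq (hE : Equivalence E) {a b : ℕ} (h : E a b) : classOf E a = classOf E b :=
  Set.ext fun z => ⟨fun hz => hE.trans hz h, fun hz => hE.trans hz (hE.symm h)⟩

theorem rep_eq_iff (hE : Equivalence E) {a b : ℕ} : E a b ↔ rep E a = rep E b := by
  constructor
  · intro h; unfold rep; rw [classOf_eq hE h]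
  · intro h
    have h1 := E_rep hE a
    have h2 := E_rep hE b
    rw [h] at h1
    exact hE.trans (hE.symm h1) h2

theorem rep_rep (hE : Equivalence E) (a : ℕ) : rep E (rep E a) = rep E a :=
  (rep_eq_iff hE).mp (E_rep hE a)

theorem classOf_rep (hE : Equivalence E) (a : ℕ) : classOf E (rep E a) = classOf E a :=
  classOf_eq hE (E_rep hE a)

/-- reps of infinite classes -/
def SS (E : ℕ → ℕ → Prop) : Set ℕ := {a | rep E a = a ∧ (classOf E a).Infinite}

/-- reps of finite classes of size ≥ m -/
def TT (E : ℕ → ℕ → Prop) (m : ℕ) : Set ℕ :=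
  {a | rep E a = a ∧ (classOf E a).Finite ∧ m ≤ (classOf E a).ncard}

theorem SS_TT_disjoint {m a : ℕ} (h1 : a ∈ SS E) (h2 : a ∈ TT E m) : False :=
  h1.2 h2.2.1

/-- elements of SS/TT are characterized and related: reps with same class are equal -/
theorem eq_of_rep_fix (hE : Equivalence E) {a b : ℕ} (ha : rep E a = a) (hb : rep E b = b)
    (h : E a b) : a = b := by
  have := (rep_eq_iff hE).mp h; rw [ha, hb] at this; exact this

/-- injection lemma -/
theorem exists_injOn_mapsTo {C D : Set ℕ}
    (h : D.Infinite ∨ (C.Finite ∧ C.ncard ≤ D.ncard)) :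
    ∃ ι : ℕ → ℕ, Set.InjOn ι C ∧ Set.MapsTo ι C D := by
  by_cases hD : D.Infinite
  · refine ⟨fun n => (Set.Infinite.natEmbedding D hD n : ℕ), ?_, ?_⟩
    · intro x _ y _ hxy
      exact (Set.Infinite.natEmbedding D hD).injective (Subtype.ext hxy)
    · intro x _; exact (Set.Infinite.natEmbedding D hD x).2
  · rcases h with h | ⟨hC, hle⟩
    · exact absurd h hD
    · have hD : D.Finite := Set.not_infinite.mp hD
      haveI := hC.fintype
      haveI := hD.fintype
      have hcard : Fintype.card C ≤ Fintype.card D := by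
        rwa [← Nat.card_coe_set_eq, ← Nat.card_coe_set_eq, Nat.card_eq_fintype_card,
          Nat.card_eq_fintype_card] at hle
      obtain ⟨e⟩ := Function.Embedding.nonempty_of_card_le hcard
      classical
      refine ⟨fun x => if hx : x ∈ C then (e ⟨x, hx⟩ : ℕ) else 0, ?_, ?_⟩
      · intro x hx y hy hxy
        simp only [dif_pos hx, dif_pos hy] at hxy
        exact congrArg Subtype.val (e.injective (Subtype.ext hxy))
      · intro x hx; simp only [dif_pos hx]; exact (e ⟨x, hx⟩).2

/-- build embedding from a class map plus per-class injections -/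
theorem emb_of_classMap (hE : Equivalence E) (hE' : Equivalence E') (φ : ℕ → ℕ)
    (hφ : ∀ x y, E x y ↔ E' (φ x) (φ y))
    (hsz : ∀ a, ∃ ι : ℕ → ℕ, Set.InjOn ι (classOf E a) ∧
      Set.MapsTo ι (classOf E a) (classOf E' (φ a))) :
    ∃ f, IsEmb E E' f := by
  classical
  choose ι hinj hmap using hsz
  refine ⟨fun x => ι (rep E x) x, ?_, ?_⟩
  · intro x y hxy
    replace hxy : ι (rep E x) x = ι (rep E y) y := hxy
    have hx : x ∈ classOf E (rep E x) := by
      rw [classOf_rep hE]; exact hE.refl x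
    have hy : y ∈ classOf E (rep E y) := by
      rw [classOf_rep hE]; exact hE.refl y
    have hmx := hmap (rep E x) hx
    have hmy := hmap (rep E y) hy
    -- from hxy : ι (rep E x) x = ι (rep E y) y, deduce E' images related hence E x y
    have hExy : E x y := by
      have h1 : E' (ι (rep E x) x) (φ (rep E x)) := hmx
      have h2 : E' (ι (rep E y) y) (φ (rep E y)) := hmy
      have h3 : E' (φ (rep E x)) (φ (rep E y)) :=
        hE'.trans (hE'.symm (hxy ▸ h1)) h2
      have h4 : E (rep E x) (rep E y) := (hφ _ _).mpr h3
      exact hE.trans (hE.symm (E_rep hE x)) (hE.trans h4 (E_rep hE y))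
    have hrr : rep E x = rep E y := (rep_eq_iff hE).mp hExy
    rw [hrr] at hxy hx
    exact hinj (rep E y) hx hy hxy
  · intro x y
    have hx : x ∈ classOf E (rep E x) := by rw [classOf_rep hE]; exact hE.refl x
    have hy : y ∈ classOf E (rep E y) := by rw [classOf_rep hE]; exact hE.refl y
    have h1 : E' (ι (rep E x) x) (φ (rep E x)) := hmap (rep E x) hx
    have h2 : E' (ι (rep E y) y) (φ (rep E y)) := hmap (rep E y) hy
    constructor
    · intro h
      have h4 : E' (φ (rep E x)) (φ (rep E y)) := by
        refine (hφ _ _).mp ?_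
        exact hE.trans (hE.trans (E_rep hE x) h) (hE.symm (E_rep hE y))
      exact hE'.trans h1 (hE'.trans h4 (hE'.symm h2))
    · intro h
      have h4 : E' (φ (rep E x)) (φ (rep E y)) :=
        hE'.trans (hE'.symm h1) (hE'.trans h h2)
      have h5 : E (rep E x) (rep E y) := (hφ _ _).mpr h4
      exact hE.trans (hE.symm (E_rep hE x)) (hE.trans h5 (E_rep hE y))

/-- label relations -/
def lrel (ℓ : ℕ → ℕ) : ℕ → ℕ → Prop := fun x y => ℓ x = ℓ y

theorem lrel_equiv (ℓ : ℕ → ℕ) : Equivalence (lrel ℓ) :=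
  ⟨fun _ => rfl, fun h => h.symm, fun h1 h2 => h1.trans h2⟩

theorem lrel_comp {ℓ : ℕ → ℕ} (hℓ : Computable ℓ) : CompRelNat (lrel ℓ) := by
  refine ⟨fun x y => decide (ℓ x = ℓ y), ?_, fun x y => by simp [lrel]⟩
  have h : Computable₂ (fun a b : ℕ => decide (a = b)) := Primrec.eq.decide.to_comp
  exact h.comp (hℓ.comp Computable.fst) (hℓ.comp Computable.snd)

theorem classOf_lrel (ℓ : ℕ → ℕ) (a : ℕ) : classOf (lrel ℓ) a = {x | ℓ x = ℓ a} := rfl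


/-- greedy, strictly increasing choice sequence -/
noncomputable def greedy (T : ℕ → Set ℕ) (σ : ℕ → ℕ) : ℕ → ℕ
  | 0 => sInf (T (σ 0))
  | n+1 => sInf {a | a ∈ T (σ (n+1)) ∧ greedy T σ n < a}

theorem greedy_mem {T : ℕ → Set ℕ} {σ : ℕ → ℕ} (hT : ∀ m, (T m).Infinite) (n : ℕ) :
    greedy T σ n ∈ T (σ n) := by
  cases n with
  | zero => exact Nat.sInf_mem (hT (σ 0)).nonempty
  | succ n =>
    obtain ⟨b, hb, hlt⟩ := (hT (σ (n+1))).exists_gt (greedy T σ n)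
    exact (Nat.sInf_mem (⟨b, hb, hlt⟩ : {a | a ∈ T (σ (n+1)) ∧ greedy T σ n < a}.Nonempty)).1

theorem greedy_lt {T : ℕ → Set ℕ} {σ : ℕ → ℕ} (hT : ∀ m, (T m).Infinite) (n : ℕ) :
    greedy T σ n < greedy T σ (n+1) := by
  obtain ⟨b, hb, hlt⟩ := (hT (σ (n+1))).exists_gt (greedy T σ n)
  exact (Nat.sInf_mem (⟨b, hb, hlt⟩ : {a | a ∈ T (σ (n+1)) ∧ greedy T σ n < a}.Nonempty)).2

theorem greedy_injective {T : ℕ → Set ℕ} {σ : ℕ → ℕ} (hT : ∀ m, (T m).Infinite) :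
    Function.Injective (greedy T σ) :=
  (strictMono_nat_of_lt_succ (greedy_lt hT)).injective

/-- forward embedding into a label relation -/
theorem emb_into_lrel (hE : Equivalence E) (σ : ℕ → ℕ) (val : ℕ → ℕ)
    (hval : ∀ x y, E x y ↔ val x = val y)
    (hne : ∀ x, {y | σ y = val x}.Nonempty)
    (hsz : ∀ x, {y | σ y = val x}.Infinite ∨
      ((classOf E x).Finite ∧ (classOf E x).ncard ≤ {y | σ y = val x}.ncard)) :
    ∃ f, IsEmb E (lrel σ) f := by
  refine emb_of_classMap hE (lrel_equiv σ) (fun x => sInf {y | σ y = val x}) ?_ ?_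
  · intro x y
    have h1 : σ (sInf {z | σ z = val x}) = val x := Nat.sInf_mem (hne x)
    have h2 : σ (sInf {z | σ z = val y}) = val y := Nat.sInf_mem (hne y)
    show E x y ↔ σ (sInf {z | σ z = val x}) = σ (sInf {z | σ z = val y})
    rw [hval x y, h1, h2]
  · intro a
    have h1 : σ (sInf {z | σ z = val a}) = val a := Nat.sInf_mem (hne a)
    show ∃ ι : ℕ → ℕ, Set.InjOn ι (classOf E a) ∧
      Set.MapsTo ι (classOf E a) (classOf (lrel σ) (sInf {z | σ z = val a}))
    have hcl : classOf (lrel σ) (sInf {z | σ z = val a}) = {y | σ y = val a} := by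
      ext z; simp only [classOf, lrel, Set.mem_setOf_eq, h1]
    rw [hcl]
    refine exists_injOn_mapsTo ?_
    rcases hsz a with h | h
    · exact Or.inl h
    · exact Or.inr h

/-- backward embedding from a label relation -/
theorem emb_from_lrel (hE : Equivalence E) (σ : ℕ → ℕ) (target : ℕ → ℕ)
    (htv : ∀ x y, σ x = σ y ↔ target x = target y)
    (hrep : ∀ x, rep E (target x) = target x)
    (hsz : ∀ x, (classOf E (target x)).Infinite ∨
      ({y | σ y = σ x}.Finite ∧ {y | σ y = σ x}.ncard ≤ (classOf E (target x)).ncard)) :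
    ∃ g, IsEmb (lrel σ) E g := by
  refine emb_of_classMap (lrel_equiv σ) hE target ?_ ?_
  · intro x y
    unfold lrel
    rw [htv x y, rep_eq_iff hE, hrep x, hrep y]
  · intro a
    have hcl : classOf (lrel σ) a = {y | σ y = σ a} := rfl
    rw [hcl]
    refine exists_injOn_mapsTo ?_
    rcases hsz a with h | h
    · exact Or.inl h
    · exact Or.inr h


theorem rep_mem_SS (hE : Equivalence E) {x : ℕ} (h : (classOf E x).Infinite) :
    rep E x ∈ SS E := ⟨rep_rep hE x, by rwa [classOf_rep hE]⟩

theorem rep_mem_TT (hE : Equivalence E) {x : ℕ} (h : (classOf E x).Finite) :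
    rep E x ∈ TT E (classOf E x).ncard :=
  ⟨rep_rep hE x, by rwa [classOf_rep hE], by rw [classOf_rep hE]⟩

theorem TT_antitone {m m' : ℕ} (h : m ≤ m') : TT E m' ⊆ TT E m :=
  fun _ ha => ⟨ha.1, ha.2.1, h.trans ha.2.2⟩

theorem classOf_ncard_pos (hE : Equivalence E) {x : ℕ} (h : (classOf E x).Finite) :
    0 < (classOf E x).ncard :=
  (Set.ncard_pos h).mpr ⟨x, hE.refl x⟩

theorem case1 (hE : Equivalence E) (hS : (SS E).Infinite) :
    ∃ E' : ℕ → ℕ → Prop, Equivalence E' ∧ CompRelNat E' ∧ BiEmb E E' := by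
  set σ : ℕ → ℕ := fun x => x.unpair.1 with hσ
  have hcomp : Computable σ := (Primrec.fst.comp Primrec.unpair).to_comp
  have hfib : ∀ i : ℕ, {y | σ y = i}.Infinite := by
    intro i
    apply Set.infinite_of_injective_forall_mem (f := fun n => Nat.pair i n)
    · intro a b hab
      simpa using congrArg (fun z => z.unpair.2) hab
    · intro n
      simp [hσ, Nat.unpair_pair]
  refine ⟨lrel σ, lrel_equiv σ, lrel_comp hcomp, ?_, ?_⟩
  · exact emb_into_lrel hE σ (fun x => rep E x) (fun x y => rep_eq_iff hE)
      (fun x => (hfib _).nonempty) (fun x => Or.inl (hfib _))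
  · set e := Set.Infinite.natEmbedding (SS E) hS with he
    refine emb_from_lrel hE σ (fun x => (e x.unpair.1 : ℕ)) ?_
      (fun x => (e x.unpair.1).2.1) (fun x => Or.inl (e x.unpair.1).2.2)
    intro x y
    constructor
    · intro h
      show ((e x.unpair.1 : ℕ)) = ((e y.unpair.1 : ℕ))
      rw [show x.unpair.1 = y.unpair.1 from h]
    · intro h
      exact e.injective (Subtype.ext h)

theorem div_eq_iff' {s b j : ℕ} (h : 0 < s) : j / s = b ↔ b*s ≤ j ∧ j < b*s + s := by
  constructor
  · rintro rfl
    refine ⟨Nat.mul_comm (j/s) s ▸ Nat.div_mul_le_self j s, ?_⟩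
    have h1 := Nat.div_add_mod j s
    have h2 := Nat.mod_lt j h
    have h3 : s * (j / s) = (j / s) * s := Nat.mul_comm _ _
    omega
  · rintro ⟨h1, h2⟩
    exact Nat.div_eq_of_lt_le h1 (by rw [Nat.succ_mul]; omega)

theorem pair_inj {a b c d : ℕ} (h : Nat.pair a b = Nat.pair c d) : a = c ∧ b = d := by
  have h1 := congrArg (fun z => z.unpair.1) h
  have h2 := congrArg (fun z => z.unpair.2) h
  simp only [Nat.unpair_pair] at h1 h2
  exact ⟨h1, h2⟩

theorem ncard_Iio' (k : ℕ) : (Set.Iio k).ncard = k := by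
  rw [← Finset.coe_Iio, Set.ncard_coe_finset, Nat.card_Iio]

theorem ncard_Ico' (a b : ℕ) : (Set.Ico a b).ncard = b - a := by
  rw [← Finset.coe_Ico, Set.ncard_coe_finset, Nat.card_Ico]

/-! ### Case 2 -/

def sz (k i : ℕ) : ℕ := (i - k).unpair.1 + 1

theorem sz_pos (k i : ℕ) : 0 < sz k i := Nat.succ_pos _

def ell2 (k : ℕ) (x : ℕ) : ℕ :=
  if x.unpair.1 < k then Nat.pair x.unpair.1 0
  else Nat.pair x.unpair.1 (x.unpair.2 / sz k x.unpair.1)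

theorem ell2_primrec (k : ℕ) : Primrec (ell2 k) := by
  have h1 : Primrec (fun x : ℕ => x.unpair.1) := Primrec.fst.comp Primrec.unpair
  have h2 : Primrec (fun x : ℕ => x.unpair.2) := Primrec.snd.comp Primrec.unpair
  have hsz : Primrec (fun x : ℕ => sz k x.unpair.1) := by
    unfold sz
    exact Primrec.succ.comp (Primrec.fst.comp (Primrec.unpair.comp
      (Primrec.nat_sub.comp h1 (Primrec.const k))))
  exact Primrec.ite (Primrec.nat_lt.comp h1 (Primrec.const k))
    (Primrec₂.natPair.comp h1 (Primrec.const 0))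
    (Primrec₂.natPair.comp h1 (Primrec.nat_div.comp h2 hsz))

theorem fiber2_lt (k : ℕ) {i : ℕ} (hi : i < k) : {y | ell2 k y = Nat.pair i 0}.Infinite := by
  apply Set.infinite_of_injective_forall_mem (f := fun n => Nat.pair i n)
  · intro a b hab
    exact (pair_inj hab).2
  · intro n
    simp only [Set.mem_setOf_eq, ell2, Nat.unpair_pair, if_pos hi]

theorem fiber2_ge (k : ℕ) {i : ℕ} (b : ℕ) (hi : k ≤ i) :
    {y | ell2 k y = Nat.pair i b} =
      (fun j => Nat.pair i j) '' Set.Ico (b * sz k i) (b * sz k i + sz k i) := by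
  ext y
  simp only [Set.mem_setOf_eq, Set.mem_image, Set.mem_Ico]
  constructor
  · intro hy
    by_cases h : y.unpair.1 < k
    · rw [ell2, if_pos h] at hy
      obtain ⟨h1, _⟩ := pair_inj hy
      omega
    · rw [ell2, if_neg h] at hy
      obtain ⟨h1, h2⟩ := pair_inj hy
      refine ⟨y.unpair.2, ?_, ?_⟩
      · rw [h1] at h2
        have := (div_eq_iff' (sz_pos k i)).mp h2
        omega
      · rw [← h1]; exact Nat.pair_unpair y
  · rintro ⟨j, hj, rfl⟩
    have hik : ¬ i < k := by omega
    rw [ell2, Nat.unpair_pair]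
    simp only [if_neg hik]
    congr 1
    exact (div_eq_iff' (sz_pos k i)).mpr (by omega)

theorem fiber2_ge_finite (k : ℕ) {i : ℕ} (b : ℕ) (hi : k ≤ i) :
    {y | ell2 k y = Nat.pair i b}.Finite := by
  rw [fiber2_ge k b hi]
  exact ((Set.finite_Ico _ _).image _)

theorem fiber2_ge_ncard (k : ℕ) {i : ℕ} (b : ℕ) (hi : k ≤ i) :
    {y | ell2 k y = Nat.pair i b}.ncard = sz k i := by
  rw [fiber2_ge k b hi, Set.ncard_image_of_injective _ (fun a b hab => (pair_inj hab).2),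
    ncard_Ico']
  omega

theorem case2 (hE : Equivalence E) (hS : (SS E).Finite) (hT : ∀ m, (TT E m).Infinite) :
    ∃ E' : ℕ → ℕ → Prop, Equivalence E' ∧ CompRelNat E' ∧ BiEmb E E' := by
  classical
  set k := (SS E).ncard with hk
  have hcomp : Computable (ell2 k) := (ell2_primrec k).to_comp
  obtain ⟨ι, hιinj, hιmap⟩ := exists_injOn_mapsTo (C := SS E) (D := Set.Iio k)
    (Or.inr ⟨hS, by rw [ncard_Iio']⟩)
  obtain ⟨u, huinj, humap⟩ := exists_injOn_mapsTo (C := Set.Iio k) (D := SS E)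
    (Or.inr ⟨Set.finite_Iio k, by rw [ncard_Iio']⟩)
  refine ⟨lrel (ell2 k), lrel_equiv _, lrel_comp hcomp, ?_, ?_⟩
  · -- forward embedding
    set val : ℕ → ℕ := fun x => if (classOf E x).Infinite then Nat.pair (ι (rep E x)) 0
      else Nat.pair (k + Nat.pair ((classOf E x).ncard - 1) (rep E x)) 0 with hvaldef
    have hvalInf : ∀ x, (classOf E x).Infinite → val x = Nat.pair (ι (rep E x)) 0 :=
      fun x h => by rw [hvaldef]; simp only [if_pos h]
    have hvalFin : ∀ x, ¬ (classOf E x).Infinite →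
        val x = Nat.pair (k + Nat.pair ((classOf E x).ncard - 1) (rep E x)) 0 :=
      fun x h => by rw [hvaldef]; simp only [if_neg h]
    have hval : ∀ x y, E x y ↔ val x = val y := by
      intro x y
      constructor
      · intro h
        have h1 := classOf_eq hE h
        have h2 := (rep_eq_iff hE).mp h
        rw [hvaldef]; simp only [h1, h2]
      · intro h
        rw [rep_eq_iff hE]
        by_cases hx : (classOf E x).Infinite <;> by_cases hy : (classOf E y).Infinite
        · rw [hvalInf x hx, hvalInf y hy] at h
          exact hιinj (rep_mem_SS hE hx) (rep_mem_SS hE hy) (pair_inj h).1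
        · rw [hvalInf x hx, hvalFin y hy] at h
          have h1 := (pair_inj h).1
          have h2 : ι (rep E x) < k := hιmap (rep_mem_SS hE hx)
          omega
        · rw [hvalFin x hx, hvalInf y hy] at h
          have h1 := (pair_inj h).1
          have h2 : ι (rep E y) < k := hιmap (rep_mem_SS hE hy)
          omega
        · rw [hvalFin x hx, hvalFin y hy] at h
          have h1 := (pair_inj h).1
          have h2 : Nat.pair ((classOf E x).ncard - 1) (rep E x)
              = Nat.pair ((classOf E y).ncard - 1) (rep E y) := by omega
          exact (pair_inj h2).2
    apply emb_into_lrel hE (ell2 k) val hval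
    · -- nonempty fibers
      intro x
      by_cases hx : (classOf E x).Infinite
      · rw [hvalInf x hx]
        exact (fiber2_lt k (hιmap (rep_mem_SS hE hx))).nonempty
      · rw [hvalFin x hx]
        apply Set.nonempty_of_ncard_ne_zero
        rw [fiber2_ge_ncard k 0 (by omega)]
        exact (sz_pos _ _).ne'
    · -- size domination
      intro x
      by_cases hx : (classOf E x).Infinite
      · rw [hvalInf x hx]
        exact Or.inl (fiber2_lt k (hιmap (rep_mem_SS hE hx)))
      · rw [hvalFin x hx]
        have hfin : (classOf E x).Finite := Set.not_infinite.mp hx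
        have hpos := classOf_ncard_pos hE hfin
        refine Or.inr ⟨hfin, ?_⟩
        rw [fiber2_ge_ncard k 0 (by omega)]
        unfold sz
        rw [Nat.add_sub_cancel_left, Nat.unpair_pair]
        omega
  · -- backward embedding
    set σs : ℕ → ℕ := fun n => n.unpair.1.unpair.1 + 1 with hσs
    set tgt : ℕ → ℕ := fun x => if x.unpair.1 < k then u x.unpair.1
      else greedy (TT E) σs (Nat.pair (x.unpair.1 - k) (x.unpair.2 / sz k x.unpair.1))
      with htgt
    have hform : ∀ x : ℕ, ¬ x.unpair.1 < k →
        ell2 k x = Nat.pair x.unpair.1 (x.unpair.2 / sz k x.unpair.1) := by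
      intro x h; rw [ell2, if_neg h]
    have hform' : ∀ x : ℕ, x.unpair.1 < k → ell2 k x = Nat.pair x.unpair.1 0 := by
      intro x h; rw [ell2, if_pos h]
    have hmemS : ∀ i, i < k → u i ∈ SS E := fun i hi => humap hi
    have hmemT : ∀ n, greedy (TT E) σs n ∈ TT E (σs n) := greedy_mem hT
    apply emb_from_lrel hE (ell2 k) tgt
    · -- htv
      intro x y
      constructor
      · intro h
        by_cases hx : x.unpair.1 < k <;> by_cases hy : y.unpair.1 < k
        · rw [hform' x hx, hform' y hy] at h
          rw [htgt]; simp only [if_pos hx, if_pos hy, (pair_inj h).1]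
        · rw [hform' x hx, hform y hy] at h
          obtain ⟨h1, _⟩ := pair_inj h; omega
        · rw [hform x hx, hform' y hy] at h
          obtain ⟨h1, _⟩ := pair_inj h; omega
        · rw [hform x hx, hform y hy] at h
          obtain ⟨h1, h2⟩ := pair_inj h
          rw [htgt]; simp only [if_neg hx, if_neg hy]
          rw [h1] at h2
          rw [h1, h2]
      · intro h
        rw [htgt] at h
        by_cases hx : x.unpair.1 < k <;> by_cases hy : y.unpair.1 < k
        · simp only [if_pos hx, if_pos hy] at h
          rw [hform' x hx, hform' y hy, huinj hx hy h]
        · simp only [if_pos hx, if_neg hy] at h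
          exact absurd (h ▸ hmemS _ hx) (fun hc => SS_TT_disjoint hc (hmemT _))
        · simp only [if_neg hx, if_pos hy] at h
          exact absurd (h ▸ hmemT _) (fun hc => SS_TT_disjoint (hmemS _ hy) hc)
        · simp only [if_neg hx, if_neg hy] at h
          have h2 := greedy_injective hT h
          obtain ⟨h3, h4⟩ := pair_inj h2
          rw [hform x hx, hform y hy]
          have h5 : x.unpair.1 = y.unpair.1 := by omega
          rw [h5] at h4 ⊢
          rw [h4]
    · -- hrep
      intro x
      rw [htgt]
      by_cases hx : x.unpair.1 < k
      · simp only [if_pos hx]; exact (hmemS _ hx).1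
      · simp only [if_neg hx]; exact (hmemT _).1
    · -- hsz
      intro x
      rw [htgt]
      by_cases hx : x.unpair.1 < k
      · simp only [if_pos hx]
        exact Or.inl (hmemS _ hx).2
      · simp only [if_neg hx]
        have hmem := hmemT (Nat.pair (x.unpair.1 - k) (x.unpair.2 / sz k x.unpair.1))
        have hσsval : σs (Nat.pair (x.unpair.1 - k) (x.unpair.2 / sz k x.unpair.1))
            = sz k x.unpair.1 := by
          rw [hσs]; simp only [Nat.unpair_pair]; rfl
        rw [hσsval] at hmem
        refine Or.inr ⟨?_, ?_⟩
        · rw [hform x hx]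
          exact fiber2_ge_finite k _ (by omega)
        · rw [hform x hx]
          rw [fiber2_ge_ncard k _ (by omega)]
          exact hmem.2.2

/-! ### prefix-list labels -/

def pl : List ℕ → ℕ → ℕ
  | [], x => x
  | w :: L, x => if x < w then 0 else pl L (x - w) + 1

theorem pl_primrec : ∀ L : List ℕ, Primrec (pl L)
  | [] => Primrec.id
  | w :: L => by
      have h := pl_primrec L
      exact Primrec.ite (Primrec.nat_lt.comp Primrec.id (Primrec.const w))
        (Primrec.const 0)
        (Primrec.succ.comp (h.comp (Primrec.nat_sub.comp Primrec.id (Primrec.const w))))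

theorem pl_lt : ∀ (L : List ℕ) (x : ℕ), x < L.sum → pl L x < L.length
  | [], x, hx => by simp at hx
  | w :: L, x, hx => by
      by_cases h : x < w
      · simp only [pl, if_pos h, List.length_cons]; omega
      · simp only [pl, if_neg h, List.length_cons]
        have : x - w < L.sum := by simp only [List.sum_cons] at hx; omega
        have := pl_lt L (x - w) this
        omega

theorem pl_fiber : ∀ (L : List ℕ) (j : ℕ) (hj : j < L.length),
    {x | x < L.sum ∧ pl L x = j} =
      Set.Ico ((L.take j).sum) ((L.take j).sum + L.get ⟨j, hj⟩)
  | [], j, hj => absurd hj (by simp)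
  | w :: L, 0, hj => by
      ext x
      simp only [Set.mem_setOf_eq, Set.mem_Ico, List.sum_cons, List.take_zero,
        List.sum_nil, List.get]
      constructor
      · rintro ⟨h1, h2⟩
        by_cases h : x < w
        · omega
        · simp only [pl, if_neg h] at h2; omega
      · intro h
        have hx : x < w := by omega
        exact ⟨by omega, by simp only [pl, if_pos hx]⟩
  | w :: L, j+1, hj => by
      have hj' : j < L.length := by simpa using hj
      have IH := Set.ext_iff.mp (pl_fiber L j hj') (x := 0)
      ext x
      have IH' := Set.ext_iff.mp (pl_fiber L j hj') (x - w)
      simp only [Set.mem_setOf_eq, Set.mem_Ico] at IH' ⊢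
      simp only [List.sum_cons, List.take_succ_cons, List.sum_cons, List.get_cons_succ]
      constructor
      · rintro ⟨h1, h2⟩
        by_cases h : x < w
        · simp only [pl, if_pos h] at h2; omega
        · simp only [pl, if_neg h] at h2
          have h3 : pl L (x - w) = j := by omega
          have h4 := IH'.mp ⟨by omega, h3⟩
          omega
      · intro h
        have hw : ¬ x < w := by omega
        have h4 := IH'.mpr ⟨by omega, by omega⟩
        refine ⟨by omega, ?_⟩
        simp only [pl, if_neg hw]
        omega

theorem sum_take_get_le (L : List ℕ) (j : ℕ) (hj : j < L.length) :
    (L.take j).sum + L.get ⟨j, hj⟩ ≤ L.sum := by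
  have h1 : (L.take (j+1)).sum + (L.drop (j+1)).sum = L.sum := List.sum_take_add_sum_drop L (j+1)
  have h2 : (L.take (j+1)).sum = (L.take j).sum + L.get ⟨j, hj⟩ := List.sum_take_succ L j hj
  omega

/-- generic prefix fiber for labels of shape `if y < W.sum then pl W y else g y`
with `g` forced to be ≥ W.length on the tail -/
theorem fiber_prefix (W : List ℕ) (g : ℕ → ℕ) (hg : ∀ z, W.length ≤ g z)
    (j : ℕ) (hj : j < W.length) :
    {y | (if y < W.sum then pl W y else g y) = j} =
      Set.Ico ((W.take j).sum) ((W.take j).sum + W.get ⟨j, hj⟩) := by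
  ext y
  have hfib := Set.ext_iff.mp (pl_fiber W j hj) y
  simp only [Set.mem_setOf_eq, Set.mem_Ico] at hfib ⊢
  constructor
  · intro hy
    by_cases h : y < W.sum
    · rw [if_pos h] at hy
      exact hfib.mp ⟨h, hy⟩
    · rw [if_neg h] at hy
      have := hg y
      omega
  · intro hy
    have h1 := hfib.mpr hy
    rw [if_pos h1.1]
    exact h1.2

/-! ### case 3 label functions -/

def tail3 (k M : ℕ) (z : ℕ) : ℕ :=
  if z.unpair.1 < k then Nat.pair z.unpair.1 0
  else Nat.pair z.unpair.1 (z.unpair.2 / (M-1))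

def sigma3 (W : List ℕ) (k M : ℕ) (x : ℕ) : ℕ :=
  if x < W.sum then pl W x else W.length + tail3 k M (x - W.sum)

def sigma0 (W : List ℕ) (k : ℕ) (x : ℕ) : ℕ :=
  if x < W.sum then pl W x else W.length + (x - W.sum) % k

theorem tail3_primrec (k M : ℕ) : Primrec (tail3 k M) := by
  have h1 : Primrec (fun x : ℕ => x.unpair.1) := Primrec.fst.comp Primrec.unpair
  have h2 : Primrec (fun x : ℕ => x.unpair.2) := Primrec.snd.comp Primrec.unpair
  exact Primrec.ite (Primrec.nat_lt.comp h1 (Primrec.const k))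
    (Primrec₂.natPair.comp h1 (Primrec.const 0))
    (Primrec₂.natPair.comp h1 (Primrec.nat_div.comp h2 (Primrec.const (M-1))))

theorem sigma3_primrec (W : List ℕ) (k M : ℕ) : Primrec (sigma3 W k M) :=
  Primrec.ite (Primrec.nat_lt.comp Primrec.id (Primrec.const W.sum))
    (pl_primrec W)
    (Primrec.nat_add.comp (Primrec.const W.length)
      ((tail3_primrec k M).comp (Primrec.nat_sub.comp Primrec.id (Primrec.const W.sum))))

theorem sigma0_primrec (W : List ℕ) (k : ℕ) : Primrec (sigma0 W k) :=
  Primrec.ite (Primrec.nat_lt.comp Primrec.id (Primrec.const W.sum))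
    (pl_primrec W)
    (Primrec.nat_add.comp (Primrec.const W.length)
      (Primrec.nat_mod.comp (Primrec.nat_sub.comp Primrec.id (Primrec.const W.sum))
        (Primrec.const k)))

theorem sigma3_fiber_lt (W : List ℕ) (k M : ℕ) {j : ℕ} (hj : j < W.length) :
    {y | sigma3 W k M y = j} =
      Set.Ico ((W.take j).sum) ((W.take j).sum + W.get ⟨j, hj⟩) := by
  have := fiber_prefix W (fun z => W.length + tail3 k M (z - W.sum))
    (fun z => Nat.le_add_right _ _) j hj
  exact this

theorem sigma0_fiber_lt (W : List ℕ) (k : ℕ) {j : ℕ} (hj : j < W.length) :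
    {y | sigma0 W k y = j} =
      Set.Ico ((W.take j).sum) ((W.take j).sum + W.get ⟨j, hj⟩) := by
  have := fiber_prefix W (fun z => W.length + (z - W.sum) % k)
    (fun z => Nat.le_add_right _ _) j hj
  exact this

theorem sigma3_fiber_inf (W : List ℕ) (k M : ℕ) {i : ℕ} (hi : i < k) :
    {y | sigma3 W k M y = W.length + Nat.pair i 0}.Infinite := by
  apply Set.infinite_of_injective_forall_mem (f := fun n => W.sum + Nat.pair i n)
  · intro a b hab
    have hab' : W.sum + Nat.pair i a = W.sum + Nat.pair i b := hab
    have h2 : Nat.pair i a = Nat.pair i b := by omega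
    exact (pair_inj h2).2
  · intro n
    have h1 : ¬ W.sum + Nat.pair i n < W.sum := by omega
    simp only [Set.mem_setOf_eq, sigma3, if_neg h1, Nat.add_sub_cancel_left, tail3,
      Nat.unpair_pair, if_pos hi]

theorem sigma0_fiber_inf (W : List ℕ) (k : ℕ) {r : ℕ} (hr : r < k) :
    {y | sigma0 W k y = W.length + r}.Infinite := by
  have hk : 0 < k := by omega
  apply Set.infinite_of_injective_forall_mem (f := fun n => W.sum + (r + n * k))
  · intro a b hab
    have hab' : W.sum + (r + a * k) = W.sum + (r + b * k) := hab
    have : a * k = b * k := by omega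
    exact Nat.eq_of_mul_eq_mul_right hk this
  · intro n
    have h1 : ¬ W.sum + (r + n * k) < W.sum := by omega
    simp only [Set.mem_setOf_eq, sigma0, if_neg h1, Nat.add_sub_cancel_left]
    rw [Nat.add_mul_mod_self_right, Nat.mod_eq_of_lt hr]

theorem sigma3_fiber_blk (W : List ℕ) (k M : ℕ) (hM : 2 ≤ M) {i : ℕ} (b : ℕ) (hi : k ≤ i) :
    {y | sigma3 W k M y = W.length + Nat.pair i b} =
      (fun j => W.sum + Nat.pair i j) '' Set.Ico (b * (M-1)) (b * (M-1) + (M-1)) := by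
  have hMpos : 0 < M - 1 := by omega
  ext y
  simp only [Set.mem_setOf_eq, Set.mem_image, Set.mem_Ico]
  constructor
  · intro hy
    by_cases h : y < W.sum
    · rw [sigma3, if_pos h] at hy
      have := pl_lt W y h
      omega
    · rw [sigma3, if_neg h] at hy
      have h2 : tail3 k M (y - W.sum) = Nat.pair i b := by omega
      by_cases h3 : (y - W.sum).unpair.1 < k
      · rw [tail3, if_pos h3] at h2
        have := (pair_inj h2).1
        omega
      · rw [tail3, if_neg h3] at h2
        obtain ⟨h4, h5⟩ := pair_inj h2
        refine ⟨(y - W.sum).unpair.2, ?_, ?_⟩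
        · have := (div_eq_iff' hMpos).mp h5
          omega
        · rw [← h4]
          rw [Nat.pair_unpair]
          omega
  · rintro ⟨j, hj, rfl⟩
    have h1 : ¬ W.sum + Nat.pair i j < W.sum := by omega
    have h3 : ¬ i < k := by omega
    simp only [sigma3, if_neg h1, Nat.add_sub_cancel_left, tail3, Nat.unpair_pair, if_neg h3]
    congr 2
    exact (div_eq_iff' hMpos).mpr (by omega)

theorem sigma3_fiber_blk_finite (W : List ℕ) (k M : ℕ) (hM : 2 ≤ M) {i : ℕ} (b : ℕ)
    (hi : k ≤ i) : {y | sigma3 W k M y = W.length + Nat.pair i b}.Finite := by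
  rw [sigma3_fiber_blk W k M hM b hi]
  exact (Set.finite_Ico _ _).image _

theorem sigma3_fiber_blk_ncard (W : List ℕ) (k M : ℕ) (hM : 2 ≤ M) {i : ℕ} (b : ℕ)
    (hi : k ≤ i) : {y | sigma3 W k M y = W.length + Nat.pair i b}.ncard = M - 1 := by
  rw [sigma3_fiber_blk W k M hM b hi,
    Set.ncard_image_of_injective _ (fun a b hab => (pair_inj (show Nat.pair i a = Nat.pair i b by
      have hab' : W.sum + Nat.pair i a = W.sum + Nat.pair i b := hab
      omega)).2), ncard_Ico']
  omega

theorem fiber_lt_finite (W : List ℕ) {j : ℕ} (hj : j < W.length)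
    {S : Set ℕ} (hS : S = Set.Ico ((W.take j).sum) ((W.take j).sum + W.get ⟨j, hj⟩)) :
    S.Finite ∧ S.ncard = W.get ⟨j, hj⟩ := by
  rw [hS]
  exact ⟨Set.finite_Ico _ _, by rw [ncard_Ico']; omega⟩

theorem case3a (hE : Equivalence E) (hS : (SS E).Finite) (h0 : (TT E 0).Finite) :
    ∃ E' : ℕ → ℕ → Prop, Equivalence E' ∧ CompRelNat E' ∧ BiEmb E E' := by
  classical
  set k := (SS E).ncard with hk
  have hfinclass : ∀ x : ℕ, ¬ (classOf E x).Infinite → rep E x ∈ TT E 0 := by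
    intro x h
    exact TT_antitone (Nat.zero_le _) (rep_mem_TT hE (Set.not_infinite.mp h))
  have hk1 : 0 < k := by
    by_contra hc
    have hSe : SS E = ∅ := (Set.ncard_eq_zero hS).mp (by omega)
    have huniv : (Set.univ : Set ℕ) ⊆ ⋃ a ∈ TT E 0, classOf E a := by
      intro x _
      have hfin : ¬ (classOf E x).Infinite := by
        intro h
        exact absurd (rep_mem_SS hE h) (by rw [hSe]; exact Set.notMem_empty _)
      exact Set.mem_biUnion (hfinclass x hfin) (hE.symm (E_rep hE x))
    have hfinU : (⋃ a ∈ TT E 0, classOf E a).Finite := h0.biUnion (fun a ha => ha.2.1)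
    exact Set.infinite_univ (hfinU.subset huniv)
  obtain ⟨ι, hιinj, hιmap⟩ := exists_injOn_mapsTo (C := SS E) (D := Set.Iio k)
    (Or.inr ⟨hS, by rw [ncard_Iio']⟩)
  obtain ⟨u, huinj, humap⟩ := exists_injOn_mapsTo (C := Set.Iio k) (D := SS E)
    (Or.inr ⟨Set.finite_Iio k, by rw [ncard_Iio']⟩)
  set l : List ℕ := h0.toFinset.toList with hl
  have hnd : l.Nodup := Finset.nodup_toList _
  have hmeml : ∀ a, a ∈ l ↔ a ∈ TT E 0 := by
    intro a; rw [hl, Finset.mem_toList, Set.Finite.mem_toFinset]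
  set Wl : List ℕ := l.map (fun a => (classOf E a).ncard) with hWl
  have hWlen : Wl.length = l.length := List.length_map _
  set t := Wl.length with ht
  have hWget : ∀ (j : ℕ) (hj : j < t) (hj' : j < l.length),
      Wl.get ⟨j, hj⟩ = (classOf E (l.get ⟨j, hj'⟩)).ncard :=
    fun j hj hj' => by simp only [hWl, List.get_eq_getElem, List.getElem_map]
  have hidxlt : ∀ a, a ∈ TT E 0 → l.idxOf a < t := by
    intro a ha
    have := List.idxOf_lt_length_iff.mpr ((hmeml a).mpr ha)
    omega
  have hidxget : ∀ a (_ : a ∈ TT E 0) (h : l.idxOf a < l.length),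
      l.get ⟨l.idxOf a, h⟩ = a := fun a _ h => List.getElem_idxOf h
  have hgetmem : ∀ (j : ℕ) (hj' : j < l.length), l.get ⟨j, hj'⟩ ∈ TT E 0 :=
    fun j hj' => (hmeml _).mp (List.get_mem l ⟨j, hj'⟩)
  have hcomp : Computable (sigma0 Wl k) := (sigma0_primrec Wl k).to_comp
  refine ⟨lrel (sigma0 Wl k), lrel_equiv _, lrel_comp hcomp, ?_, ?_⟩
  · -- forward embedding
    set val : ℕ → ℕ := fun x => if (classOf E x).Infinite then t + ι (rep E x)
      else l.idxOf (rep E x) with hvaldef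
    have hvalI : ∀ x, (classOf E x).Infinite → val x = t + ι (rep E x) := by
      intro x h; rw [hvaldef]; simp only [if_pos h]
    have hvalF : ∀ x, ¬ (classOf E x).Infinite → val x = l.idxOf (rep E x) := by
      intro x h; rw [hvaldef]; simp only [if_neg h]
    have hval : ∀ x y, E x y ↔ val x = val y := by
      intro x y
      constructor
      · intro h
        rw [hvaldef]
        simp only [classOf_eq hE h, (rep_eq_iff hE).mp h]
      · intro h
        rw [rep_eq_iff hE]
        by_cases hx : (classOf E x).Infinite <;> by_cases hy : (classOf E y).Infinite
        · rw [hvalI x hx, hvalI y hy] at h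
          exact hιinj (rep_mem_SS hE hx) (rep_mem_SS hE hy) (by omega)
        · rw [hvalI x hx, hvalF y hy] at h
          have := hidxlt _ (hfinclass y hy)
          omega
        · rw [hvalF x hx, hvalI y hy] at h
          have := hidxlt _ (hfinclass x hx)
          omega
        · rw [hvalF x hx, hvalF y hy] at h
          have h1 := hidxget _ (hfinclass x hx) (by have := hidxlt _ (hfinclass x hx); omega)
          have h2 := hidxget _ (hfinclass y hy) (by have := hidxlt _ (hfinclass y hy); omega)
          exact h1.symm.trans ((congrArg l.get (Fin.ext h)).trans h2)
    apply emb_into_lrel hE (sigma0 Wl k) val hval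
    · intro x
      by_cases hx : (classOf E x).Infinite
      · rw [hvalI x hx]
        exact (sigma0_fiber_inf Wl k (hιmap (rep_mem_SS hE hx))).nonempty
      · rw [hvalF x hx]
        have hj := hidxlt _ (hfinclass x hx)
        apply Set.nonempty_of_ncard_ne_zero
        rw [(fiber_lt_finite Wl hj (sigma0_fiber_lt Wl k hj)).2, hWget _ hj (by omega),
          hidxget _ (hfinclass x hx) (by omega), classOf_rep hE]
        exact (classOf_ncard_pos hE (Set.not_infinite.mp hx)).ne'
    · intro x
      by_cases hx : (classOf E x).Infinite
      · rw [hvalI x hx]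
        exact Or.inl (sigma0_fiber_inf Wl k (hιmap (rep_mem_SS hE hx)))
      · rw [hvalF x hx]
        have hj := hidxlt _ (hfinclass x hx)
        refine Or.inr ⟨Set.not_infinite.mp hx, ?_⟩
        rw [(fiber_lt_finite Wl hj (sigma0_fiber_lt Wl k hj)).2, hWget _ hj (by omega),
          hidxget _ (hfinclass x hx) (by omega), classOf_rep hE]
  · -- backward embedding
    set F : ℕ → ℕ := fun v => if hv : v < t then l.get ⟨v, by omega⟩ else u (v - t) with hF
    have hF1 : ∀ v (hv : v < t) (hv' : v < l.length), F v = l.get ⟨v, hv'⟩ := by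
      intro v hv hv'; rw [hF]; simp only [dif_pos hv]
    have hF2 : ∀ r, F (t + r) = u r := by
      intro r; rw [hF]
      have : ¬ t + r < t := by omega
      simp only [dif_neg this, Nat.add_sub_cancel_left]
    have hform : ∀ x, sigma0 Wl k x < t ∨ ∃ r, r < k ∧ sigma0 Wl k x = t + r := by
      intro x
      by_cases h : x < Wl.sum
      · left
        rw [sigma0, if_pos h]
        exact pl_lt Wl x h
      · right
        refine ⟨(x - Wl.sum) % k, Nat.mod_lt _ hk1, ?_⟩
        rw [sigma0, if_neg h]
    apply emb_from_lrel hE (sigma0 Wl k) (fun x => F (sigma0 Wl k x))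
    · intro x y
      constructor
      · intro h; rw [h]
      · intro h
        rcases hform x with hx | ⟨rx, hrx, hx⟩ <;> rcases hform y with hy | ⟨ry, hry, hy⟩
        · have hx' := hF1 _ hx (by omega : sigma0 Wl k x < l.length)
          have hy' := hF1 _ hy (by omega : sigma0 Wl k y < l.length)
          have h' := hx'.symm.trans (h.trans hy')
          have h2 := congrArg Fin.val (List.nodup_iff_injective_get.mp hnd h')
          exact h2
        · have hx' := hF1 _ hx (by omega : sigma0 Wl k x < l.length)
          have hy' : F (sigma0 Wl k y) = u ry := by rw [hy]; exact hF2 ry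
          have h' := hx'.symm.trans (h.trans hy')
          exact absurd (h' ▸ hgetmem _ (by omega : sigma0 Wl k x < l.length))
            (fun hc => SS_TT_disjoint (humap hry) hc)
        · have hx' : F (sigma0 Wl k x) = u rx := by rw [hx]; exact hF2 rx
          have hy' := hF1 _ hy (by omega : sigma0 Wl k y < l.length)
          have h' := hx'.symm.trans (h.trans hy')
          exact absurd (h'.symm ▸ humap hrx)
            (fun hc => SS_TT_disjoint hc (hgetmem _ (by omega : sigma0 Wl k y < l.length)))
        · have hx' : F (sigma0 Wl k x) = u rx := by rw [hx]; exact hF2 rx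
          have hy' : F (sigma0 Wl k y) = u ry := by rw [hy]; exact hF2 ry
          have h' := hx'.symm.trans (h.trans hy')
          have := huinj hrx hry h'
          omega
    · intro x
      rcases hform x with hx | ⟨rx, hrx, hx⟩
      · rw [hF1 _ hx (by omega : sigma0 Wl k x < l.length)]
        exact (hgetmem _ (by omega : sigma0 Wl k x < l.length)).1
      · have hx' : F (sigma0 Wl k x) = u rx := by rw [hx]; exact hF2 rx
        rw [hx']
        exact (humap hrx).1
    · intro x
      rcases hform x with hx | ⟨rx, hrx, hx⟩
      · rw [hF1 _ hx (by omega : sigma0 Wl k x < l.length)]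
        refine Or.inr ⟨?_, ?_⟩
        · exact (fiber_lt_finite Wl hx (sigma0_fiber_lt Wl k hx)).1
        · rw [(fiber_lt_finite Wl hx (sigma0_fiber_lt Wl k hx)).2,
            hWget _ hx (by omega : sigma0 Wl k x < l.length)]
      · have hx' : F (sigma0 Wl k x) = u rx := by rw [hx]; exact hF2 rx
        rw [hx']
        exact Or.inl (humap hrx).2

theorem case3b (hE : Equivalence E) (hS : (SS E).Finite) {M : ℕ} (hM : 2 ≤ M)
    (hMfin : (TT E M).Finite) (hMmin : ∀ m, m < M → (TT E m).Infinite) :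
    ∃ E' : ℕ → ℕ → Prop, Equivalence E' ∧ CompRelNat E' ∧ BiEmb E E' := by
  classical
  set k := (SS E).ncard with hk
  obtain ⟨ι, hιinj, hιmap⟩ := exists_injOn_mapsTo (C := SS E) (D := Set.Iio k)
    (Or.inr ⟨hS, by rw [ncard_Iio']⟩)
  obtain ⟨u, huinj, humap⟩ := exists_injOn_mapsTo (C := Set.Iio k) (D := SS E)
    (Or.inr ⟨Set.finite_Iio k, by rw [ncard_Iio']⟩)
  have hdiff : (TT E (M-1) \ TT E M).Infinite := (hMmin (M-1) (by omega)).diff hMfin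
  set eT : ℕ → ℕ := fun n => (Set.Infinite.natEmbedding _ hdiff n : ℕ) with heT
  have heTinj : Function.Injective eT := by
    intro a b hab
    exact (Set.Infinite.natEmbedding _ hdiff).injective (Subtype.ext hab)
  have heTmem : ∀ n, eT n ∈ TT E (M-1) \ TT E M := fun n =>
    (Set.Infinite.natEmbedding _ hdiff n).2
  set l : List ℕ := hMfin.toFinset.toList with hl
  have hnd : l.Nodup := Finset.nodup_toList _
  have hmeml : ∀ a, a ∈ l ↔ a ∈ TT E M := by
    intro a; rw [hl, Finset.mem_toList, Set.Finite.mem_toFinset]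
  set Wl : List ℕ := l.map (fun a => (classOf E a).ncard) with hWl
  have hWlen : Wl.length = l.length := List.length_map _
  set t := Wl.length with ht
  have hWget : ∀ (j : ℕ) (hj : j < t) (hj' : j < l.length),
      Wl.get ⟨j, hj⟩ = (classOf E (l.get ⟨j, hj'⟩)).ncard :=
    fun j hj hj' => by simp only [hWl, List.get_eq_getElem, List.getElem_map]
  have hidxlt : ∀ a, a ∈ TT E M → l.idxOf a < t := by
    intro a ha
    have := List.idxOf_lt_length_iff.mpr ((hmeml a).mpr ha)
    omega
  have hidxget : ∀ a (_ : a ∈ TT E M) (h : l.idxOf a < l.length),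
      l.get ⟨l.idxOf a, h⟩ = a := fun a _ h => List.getElem_idxOf h
  have hgetmem : ∀ (j : ℕ) (hj' : j < l.length), l.get ⟨j, hj'⟩ ∈ TT E M :=
    fun j hj' => (hmeml _).mp (List.get_mem l ⟨j, hj'⟩)
  have hcomp : Computable (sigma3 Wl k M) := (sigma3_primrec Wl k M).to_comp
  -- finite classes of size ≥ M have reps in TT E M
  have hbig : ∀ x, ¬ (classOf E x).Infinite → M ≤ (classOf E x).ncard → rep E x ∈ TT E M := by
    intro x hx hle
    exact TT_antitone hle (rep_mem_TT hE (Set.not_infinite.mp hx))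
  refine ⟨lrel (sigma3 Wl k M), lrel_equiv _, lrel_comp hcomp, ?_, ?_⟩
  · -- forward embedding
    set val : ℕ → ℕ := fun x =>
      if (classOf E x).Infinite then t + Nat.pair (ι (rep E x)) 0
      else if M ≤ (classOf E x).ncard then l.idxOf (rep E x)
      else t + Nat.pair (k + rep E x) 0 with hvaldef
    have hvalI : ∀ x, (classOf E x).Infinite → val x = t + Nat.pair (ι (rep E x)) 0 := by
      intro x h; rw [hvaldef]; simp only [if_pos h]
    have hvalB : ∀ x, ¬ (classOf E x).Infinite → M ≤ (classOf E x).ncard →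
        val x = l.idxOf (rep E x) := by
      intro x h h2; rw [hvaldef]; simp only [if_neg h, if_pos h2]
    have hvalS : ∀ x, ¬ (classOf E x).Infinite → ¬ M ≤ (classOf E x).ncard →
        val x = t + Nat.pair (k + rep E x) 0 := by
      intro x h h2; rw [hvaldef]; simp only [if_neg h, if_neg h2]
    have hval : ∀ x y, E x y ↔ val x = val y := by
      intro x y
      constructor
      · intro h
        rw [hvaldef]
        simp only [classOf_eq hE h, (rep_eq_iff hE).mp h]
      · intro h
        rw [rep_eq_iff hE]
        by_cases hx : (classOf E x).Infinite <;> by_cases hy : (classOf E y).Infinite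
        · rw [hvalI x hx, hvalI y hy] at h
          have h2 : Nat.pair (ι (rep E x)) 0 = Nat.pair (ι (rep E y)) 0 := by omega
          exact hιinj (rep_mem_SS hE hx) (rep_mem_SS hE hy) (pair_inj h2).1
        · -- x infinite, y finite
          by_cases hy2 : M ≤ (classOf E y).ncard
          · rw [hvalI x hx, hvalB y hy hy2] at h
            have := hidxlt _ (hbig y hy hy2)
            omega
          · rw [hvalI x hx, hvalS y hy hy2] at h
            have h2 : Nat.pair (ι (rep E x)) 0 = Nat.pair (k + rep E y) 0 := by omega
            have h3 := (pair_inj h2).1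
            have := hιmap (rep_mem_SS hE hx)
            simp only [Set.mem_Iio] at this
            omega
        · by_cases hx2 : M ≤ (classOf E x).ncard
          · rw [hvalB x hx hx2, hvalI y hy] at h
            have := hidxlt _ (hbig x hx hx2)
            omega
          · rw [hvalS x hx hx2, hvalI y hy] at h
            have h2 : Nat.pair (k + rep E x) 0 = Nat.pair (ι (rep E y)) 0 := by omega
            have h3 := (pair_inj h2).1
            have := hιmap (rep_mem_SS hE hy)
            simp only [Set.mem_Iio] at this
            omega
        · by_cases hx2 : M ≤ (classOf E x).ncard <;> by_cases hy2 : M ≤ (classOf E y).ncard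
          · rw [hvalB x hx hx2, hvalB y hy hy2] at h
            have h1 := hidxget _ (hbig x hx hx2) (by have := hidxlt _ (hbig x hx hx2); omega)
            have h2 := hidxget _ (hbig y hy hy2) (by have := hidxlt _ (hbig y hy hy2); omega)
            exact h1.symm.trans ((congrArg l.get (Fin.ext h)).trans h2)
          · rw [hvalB x hx hx2, hvalS y hy hy2] at h
            have := hidxlt _ (hbig x hx hx2)
            omega
          · rw [hvalS x hx hx2, hvalB y hy hy2] at h
            have := hidxlt _ (hbig y hy hy2)
            omega
          · rw [hvalS x hx hx2, hvalS y hy hy2] at h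
            have h2 : Nat.pair (k + rep E x) 0 = Nat.pair (k + rep E y) 0 := by omega
            have h3 := (pair_inj h2).1
            omega
    apply emb_into_lrel hE (sigma3 Wl k M) val hval
    · -- nonempty fibers
      intro x
      by_cases hx : (classOf E x).Infinite
      · rw [hvalI x hx]
        exact (sigma3_fiber_inf Wl k M (hιmap (rep_mem_SS hE hx))).nonempty
      · by_cases hx2 : M ≤ (classOf E x).ncard
        · rw [hvalB x hx hx2]
          have hj := hidxlt _ (hbig x hx hx2)
          apply Set.nonempty_of_ncard_ne_zero
          rw [(fiber_lt_finite Wl hj (sigma3_fiber_lt Wl k M hj)).2,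
            hWget _ hj (by omega), hidxget _ (hbig x hx hx2) (by omega), classOf_rep hE]
          exact (classOf_ncard_pos hE (Set.not_infinite.mp hx)).ne'
        · rw [hvalS x hx hx2]
          apply Set.nonempty_of_ncard_ne_zero
          rw [sigma3_fiber_blk_ncard Wl k M hM 0 (by omega)]
          omega
    · -- size domination
      intro x
      by_cases hx : (classOf E x).Infinite
      · rw [hvalI x hx]
        exact Or.inl (sigma3_fiber_inf Wl k M (hιmap (rep_mem_SS hE hx)))
      · by_cases hx2 : M ≤ (classOf E x).ncard
        · rw [hvalB x hx hx2]
          have hj := hidxlt _ (hbig x hx hx2)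
          refine Or.inr ⟨Set.not_infinite.mp hx, ?_⟩
          rw [(fiber_lt_finite Wl hj (sigma3_fiber_lt Wl k M hj)).2,
            hWget _ hj (by omega), hidxget _ (hbig x hx hx2) (by omega), classOf_rep hE]
        · rw [hvalS x hx hx2]
          refine Or.inr ⟨Set.not_infinite.mp hx, ?_⟩
          rw [sigma3_fiber_blk_ncard Wl k M hM 0 (by omega)]
          omega
  · -- backward embedding
    set F : ℕ → ℕ := fun v =>
      if hv : v < t then l.get ⟨v, by omega⟩
      else if (v - t).unpair.1 < k then u ((v - t).unpair.1)
      else eT (Nat.pair ((v - t).unpair.1 - k) ((v - t).unpair.2)) with hF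
    have hF1 : ∀ v (hv : v < t) (hv' : v < l.length), F v = l.get ⟨v, hv'⟩ := by
      intro v hv hv'; rw [hF]; simp only [dif_pos hv]
    have hF2 : ∀ i, i < k → F (t + Nat.pair i 0) = u i := by
      intro i hi
      rw [hF]
      have h1 : ¬ t + Nat.pair i 0 < t := by omega
      simp only [dif_neg h1, Nat.add_sub_cancel_left, Nat.unpair_pair, if_pos hi]
    have hF3 : ∀ i b, ¬ i < k → F (t + Nat.pair i b) = eT (Nat.pair (i - k) b) := by
      intro i b hi
      rw [hF]
      have h1 : ¬ t + Nat.pair i b < t := by omega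
      simp only [dif_neg h1, Nat.add_sub_cancel_left, Nat.unpair_pair, if_neg hi]
    have hform : ∀ x, sigma3 Wl k M x < t ∨
        (∃ i, i < k ∧ sigma3 Wl k M x = t + Nat.pair i 0) ∨
        (∃ i b, ¬ i < k ∧ sigma3 Wl k M x = t + Nat.pair i b) := by
      intro x
      by_cases h : x < Wl.sum
      · left
        rw [sigma3, if_pos h]
        exact pl_lt Wl x h
      · right
        by_cases h2 : (x - Wl.sum).unpair.1 < k
        · left
          exact ⟨(x - Wl.sum).unpair.1, h2, by rw [sigma3, if_neg h, tail3, if_pos h2]⟩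
        · right
          exact ⟨(x - Wl.sum).unpair.1, (x - Wl.sum).unpair.2 / (M-1), h2,
            by rw [sigma3, if_neg h, tail3, if_neg h2]⟩
    apply emb_from_lrel hE (sigma3 Wl k M) (fun x => F (sigma3 Wl k M x))
    · intro x y
      constructor
      · intro h; rw [h]
      · intro h
        rcases hform x with hx | ⟨i, hi, hx⟩ | ⟨i, b, hi, hx⟩ <;>
          rcases hform y with hy | ⟨i', hi', hy⟩ | ⟨i', b', hi', hy⟩
        · have hx' := hF1 _ hx (by omega : sigma3 Wl k M x < l.length)
          have hy' := hF1 _ hy (by omega : sigma3 Wl k M y < l.length)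
          exact congrArg Fin.val (List.nodup_iff_injective_get.mp hnd
            (hx'.symm.trans (h.trans hy')))
        · have hx' := hF1 _ hx (by omega : sigma3 Wl k M x < l.length)
          have hy' : F (sigma3 Wl k M y) = u i' := by rw [hy]; exact hF2 i' hi'
          have h' := hx'.symm.trans (h.trans hy')
          exact absurd (h' ▸ hgetmem _ (by omega : sigma3 Wl k M x < l.length))
            (fun hc => SS_TT_disjoint (humap hi') hc)
        · have hx' := hF1 _ hx (by omega : sigma3 Wl k M x < l.length)
          have hy' : F (sigma3 Wl k M y) = eT (Nat.pair (i' - k) b') := by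
            rw [hy]; exact hF3 i' b' hi'
          have h' := hx'.symm.trans (h.trans hy')
          exact absurd (h' ▸ hgetmem _ (by omega : sigma3 Wl k M x < l.length))
            (heTmem _).2
        · have hx' : F (sigma3 Wl k M x) = u i := by rw [hx]; exact hF2 i hi
          have hy' := hF1 _ hy (by omega : sigma3 Wl k M y < l.length)
          have h' := hx'.symm.trans (h.trans hy')
          exact absurd (h'.symm ▸ humap hi)
            (fun hc => SS_TT_disjoint hc (hgetmem _ (by omega : sigma3 Wl k M y < l.length)))
        · have hx' : F (sigma3 Wl k M x) = u i := by rw [hx]; exact hF2 i hi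
          have hy' : F (sigma3 Wl k M y) = u i' := by rw [hy]; exact hF2 i' hi'
          have h' := hx'.symm.trans (h.trans hy')
          have := huinj hi hi' h'
          rw [hx, hy, this]
        · have hx' : F (sigma3 Wl k M x) = u i := by rw [hx]; exact hF2 i hi
          have hy' : F (sigma3 Wl k M y) = eT (Nat.pair (i' - k) b') := by
            rw [hy]; exact hF3 i' b' hi'
          have h' := hx'.symm.trans (h.trans hy')
          exact absurd (h' ▸ humap hi) (fun hc => SS_TT_disjoint hc (heTmem _).1)
        · have hx' : F (sigma3 Wl k M x) = eT (Nat.pair (i - k) b) := by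
            rw [hx]; exact hF3 i b hi
          have hy' := hF1 _ hy (by omega : sigma3 Wl k M y < l.length)
          have h' := hx'.symm.trans (h.trans hy')
          exact absurd (h'.symm ▸ hgetmem _ (by omega : sigma3 Wl k M y < l.length))
            (heTmem _).2
        · have hx' : F (sigma3 Wl k M x) = eT (Nat.pair (i - k) b) := by
            rw [hx]; exact hF3 i b hi
          have hy' : F (sigma3 Wl k M y) = u i' := by rw [hy]; exact hF2 i' hi'
          have h' := hx'.symm.trans (h.trans hy')
          exact absurd (h'.symm ▸ humap hi') (fun hc => SS_TT_disjoint hc (heTmem _).1)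
        · have hx' : F (sigma3 Wl k M x) = eT (Nat.pair (i - k) b) := by
            rw [hx]; exact hF3 i b hi
          have hy' : F (sigma3 Wl k M y) = eT (Nat.pair (i' - k) b') := by
            rw [hy]; exact hF3 i' b' hi'
          have h' := hx'.symm.trans (h.trans hy')
          have h2 := pair_inj (heTinj h')
          rw [hx, hy]
          have : i = i' := by omega
          rw [this, h2.2]
    · intro x
      rcases hform x with hx | ⟨i, hi, hx⟩ | ⟨i, b, hi, hx⟩
      · rw [hF1 _ hx (by omega : sigma3 Wl k M x < l.length)]
        exact (hgetmem _ (by omega : sigma3 Wl k M x < l.length)).1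
      · have hx' : F (sigma3 Wl k M x) = u i := by rw [hx]; exact hF2 i hi
        rw [hx']
        exact (humap hi).1
      · have hx' : F (sigma3 Wl k M x) = eT (Nat.pair (i - k) b) := by
          rw [hx]; exact hF3 i b hi
        rw [hx']
        exact (heTmem _).1.1
    · intro x
      rcases hform x with hx | ⟨i, hi, hx⟩ | ⟨i, b, hi, hx⟩
      · rw [hF1 _ hx (by omega : sigma3 Wl k M x < l.length)]
        refine Or.inr ⟨?_, ?_⟩
        · exact (fiber_lt_finite Wl hx (sigma3_fiber_lt Wl k M hx)).1
        · rw [(fiber_lt_finite Wl hx (sigma3_fiber_lt Wl k M hx)).2,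
            hWget _ hx (by omega : sigma3 Wl k M x < l.length)]
      · have hx' : F (sigma3 Wl k M x) = u i := by rw [hx]; exact hF2 i hi
        rw [hx']
        exact Or.inl (humap hi).2
      · have hx' : F (sigma3 Wl k M x) = eT (Nat.pair (i - k) b) := by
          rw [hx]; exact hF3 i b hi
        rw [hx']
        refine Or.inr ⟨?_, ?_⟩
        · rw [show {y | sigma3 Wl k M y = sigma3 Wl k M x}
              = {y | sigma3 Wl k M y = t + Nat.pair i b} by rw [hx]]
          exact sigma3_fiber_blk_finite Wl k M hM b (by omega)
        · rw [show {y | sigma3 Wl k M y = sigma3 Wl k M x}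
              = {y | sigma3 Wl k M y = t + Nat.pair i b} by rw [hx]]
          rw [sigma3_fiber_blk_ncard Wl k M hM b (by omega)]
          have := (heTmem (Nat.pair (i - k) b)).1.2.2
          omega

theorem main (hE : Equivalence E) :
    ∃ E' : ℕ → ℕ → Prop, Equivalence E' ∧ CompRelNat E' ∧ BiEmb E E' := by
  classical
  by_cases hS : (SS E).Infinite
  · exact case1 hE hS
  · have hSf : (SS E).Finite := Set.not_infinite.mp hS
    by_cases hT : ∀ m, (TT E m).Infinite
    · exact case2 hE hSf hT
    · push_neg at hT
      have hex : ∃ m, (TT E m).Finite := by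
        obtain ⟨m, hm⟩ := hT
        exact ⟨m, hm⟩
      have hMfin : (TT E (Nat.find hex)).Finite := Nat.find_spec hex
      have hMmin : ∀ m, m < Nat.find hex → (TT E m).Infinite := by
        intro m hm
        by_contra h2
        exact (Nat.find_min hex hm) (Set.not_infinite.mp h2)
      rcases Nat.eq_zero_or_pos (Nat.find hex) with h0 | hpos
      · exact case3a hE hSf (h0 ▸ hMfin)
      · have hM2 : 2 ≤ Nat.find hex := by
          by_contra h2
          have hM1 : Nat.find hex = 1 := by omega
          have h01 : TT E 0 ⊆ TT E 1 := by
            intro a ha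
            exact ⟨ha.1, ha.2.1, classOf_ncard_pos hE ha.2.1⟩
          have hinf0 := hMmin 0 (by omega)
          rw [hM1] at hMfin
          exact hinf0 (hMfin.subset h01)
        exact case3b hE hSf hM2 hMfin hMmin

end S9

/-- Every equivalence structure on ℕ is bi-embeddable with a computable one. -/
theorem stmt9 (E : ℕ → ℕ → Prop) (hE : Equivalence E) :
    ∃ E' : ℕ → ℕ → Prop, Equivalence E' ∧ CompRelNat E' ∧ BiEmb E E' :=
  S9.main hE
end

section
/- Fix n ≥ 2 and let A_n be the computable equivalence relation on ℕ defined by x ~ y iff ⌊x/n⌋ = ⌊y/n⌋ (so A_n has infinitely many classes, each of size exactly n). There is a uniformly computable family of equivalence relations (R_e)_{e∈ℕ} on ℕ (i.e., a total computable function R : ℕ → ℕ → ℕ → Bool such that each R_e is an equivalence relation) such that for every e: R_e is bi-embeddable with A_n if and only if W_e is infinite. -/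
/-! ### Auxiliary constructions for `stmt13` -/

open Nat.Partrec (Code)

/-- Count of elements `x < s` with `evaln s (code e) x` defined (list version, for
computability). -/
def myCnt (e s : ℕ) : ℕ :=
  ((List.range s).filterMap fun x =>
    Nat.Partrec.Code.evaln s (Denumerable.ofNat Nat.Partrec.Code e) x).length

/-- Finset version of `myCnt`. -/
def myCntF (e s : ℕ) : ℕ :=
  ((Finset.range s).filter fun x =>
    (Nat.Partrec.Code.evaln s (Denumerable.ofNat Nat.Partrec.Code e) x).isSome = true).card

lemma length_filterMap_eq_card (s : ℕ) (O : ℕ → Option ℕ) :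
    ((List.range s).filterMap O).length
      = ((Finset.range s).filter fun x => (O x).isSome = true).card := by
  induction s with
  | zero => simp
  | succ s ih =>
    rw [List.range_succ, List.filterMap_append, Finset.range_add_one, Finset.filter_insert]
    cases hO : (O s).isSome with
    | true =>
      rw [if_pos rfl]
      obtain ⟨y, hy⟩ := Option.isSome_iff_exists.1 hO
      rw [Finset.card_insert_of_notMem (by simp)]
      simp [hy, ih]
    | false =>
      rw [if_neg (by simp)]
      have : O s = none := Option.not_isSome_iff_eq_none.1 (by simp [hO])
      simp [this, ih]

lemma myCnt_eq (e s : ℕ) : myCnt e s = myCntF e s :=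
  length_filterMap_eq_card s _

lemma myCntF_mono (e : ℕ) : Monotone (myCntF e) := by
  apply monotone_nat_of_le_succ
  intro s
  apply Finset.card_le_card
  intro x hx
  simp only [Finset.mem_filter, Finset.mem_range] at hx ⊢
  obtain ⟨hxs, hsome⟩ := hx
  obtain ⟨y, hy⟩ := Option.isSome_iff_exists.1 hsome
  refine ⟨hxs.trans (Nat.lt_succ_self s), Option.isSome_iff_exists.2
    ⟨y, Nat.Partrec.Code.evaln_mono (Nat.le_succ s) hy⟩⟩

/-- Stages at which the count grows. -/
def myGrows (e s : ℕ) : Bool := decide (myCnt e s < myCnt e (s + 1))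

/-- The uniformly computable family of relations. -/
def myR (n e x y : ℕ) : Bool :=
  decide (x = y) || (decide (x / n = y / n) && myGrows e (x / n))

lemma myCntF_le_of_finite {e : ℕ} (h : (W e).Finite) (s : ℕ) :
    myCntF e s ≤ h.toFinset.card := by
  apply Finset.card_le_card
  intro x hx
  simp only [Finset.mem_filter, Finset.mem_range] at hx
  obtain ⟨_, hsome⟩ := hx
  obtain ⟨y, hy⟩ := Option.isSome_iff_exists.1 hsome
  have := Nat.Partrec.Code.evaln_sound hy
  simp only [Set.Finite.mem_toFinset]
  exact Part.dom_iff_mem.2 ⟨y, this⟩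

lemma myCntF_unbounded_of_infinite {e : ℕ} (h : (W e).Infinite) (m : ℕ) :
    ∃ s, m ≤ myCntF e s := by
  obtain ⟨S, hS, hcard⟩ := h.exists_subset_card_eq m
  have hall : ∀ x ∈ S, ∃ k,
      (Nat.Partrec.Code.evaln k (Denumerable.ofNat Nat.Partrec.Code e) x).isSome = true := by
    intro x hx
    have hdom : ((Denumerable.ofNat Nat.Partrec.Code e).eval x).Dom := hS hx
    obtain ⟨y, hy⟩ := Part.dom_iff_mem.1 hdom
    obtain ⟨k, hk⟩ := Nat.Partrec.Code.evaln_complete.1 hy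
    exact ⟨k, Option.isSome_iff_exists.2 ⟨y, hk⟩⟩
  choose! k hk using hall
  refine ⟨S.sup fun x => max (x + 1) (k x), ?_⟩
  rw [← hcard]
  apply Finset.card_le_card
  intro x hx
  have hle : max (x + 1) (k x) ≤ S.sup fun x => max (x + 1) (k x) := Finset.le_sup (f := fun x => max (x + 1) (k x)) hx
  simp only [Finset.mem_filter, Finset.mem_range]
  obtain ⟨y, hy⟩ := Option.isSome_iff_exists.1 (hk x hx)
  refine ⟨lt_of_lt_of_le (Nat.lt_succ_self x) (le_trans (le_max_left _ _) hle), ?_⟩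
  exact Option.isSome_iff_exists.2
    ⟨y, Nat.Partrec.Code.evaln_mono (le_trans (le_max_right _ _) hle) hy⟩

lemma grows_infinite_of_unbounded {e : ℕ} (h : ∀ m, ∃ s, m ≤ myCntF e s) :
    {s | myGrows e s = true}.Infinite := by
  by_contra hfin
  rw [Set.not_infinite] at hfin
  obtain ⟨B, hB⟩ := hfin.bddAbove
  have hstep : ∀ t, myCntF e (B + 1 + t) = myCntF e (B + 1) := by
    intro t
    induction t with
    | zero => rfl
    | succ t ih =>
      have hnot : myGrows e (B + 1 + t) ≠ true := by
        intro hmem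
        exact absurd (hB hmem) (by omega)
      have : ¬ myCnt e (B + 1 + t) < myCnt e (B + 1 + t + 1) := by
        simpa [myGrows] using hnot
      have h2 := myCntF_mono e (Nat.le_succ (B + 1 + t))
      rw [myCnt_eq, myCnt_eq] at this
      have : myCntF e (B + 1 + t + 1) = myCntF e (B + 1 + t) := le_antisymm (by omega) h2
      rw [show B + 1 + (t + 1) = B + 1 + t + 1 by omega, this, ih]
  obtain ⟨s, hs⟩ := h (myCntF e (B + 1) + 1)
  rcases le_or_gt s (B + 1) with hle | hlt
  · have := myCntF_mono e hle
    omega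
  · have := hstep (s - (B + 1))
    rw [show B + 1 + (s - (B + 1)) = s by omega] at this
    omega

lemma unbounded_of_grows_infinite {e : ℕ} (h : {s | myGrows e s = true}.Infinite) :
    ∀ m, ∃ s, m ≤ myCntF e s := by
  intro m
  induction m with
  | zero => exact ⟨0, Nat.zero_le _⟩
  | succ m ih =>
    obtain ⟨s, hs⟩ := ih
    obtain ⟨t, ht, hst⟩ := h.exists_gt s
    have hgt : myCnt e t < myCnt e (t + 1) := by simpa [myGrows] using ht
    rw [myCnt_eq, myCnt_eq] at hgt
    have := myCntF_mono e (le_of_lt hst)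
    exact ⟨t + 1, by omega⟩

lemma grows_infinite_iff_W_infinite (e : ℕ) :
    {s | myGrows e s = true}.Infinite ↔ (W e).Infinite := by
  constructor
  · intro h
    by_contra hfin
    rw [Set.not_infinite] at hfin
    obtain ⟨s, hs⟩ := unbounded_of_grows_infinite h (hfin.toFinset.card + 1)
    have := myCntF_le_of_finite hfin s
    omega
  · intro h
    exact grows_infinite_of_unbounded (myCntF_unbounded_of_infinite h)

lemma myR_iff (n e x y : ℕ) :
    myR n e x y = true ↔ x = y ∨ (x / n = y / n ∧ myGrows e (x / n) = true) := by
  simp [myR]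

lemma myR_equiv (n e : ℕ) : Equivalence (fun x y => myR n e x y = true) := by
  constructor
  · intro x; simp [myR]
  · intro x y h
    rcases (myR_iff n e x y).1 h with h | ⟨hd, hg⟩
    · exact (myR_iff n e y x).2 (Or.inl h.symm)
    · exact (myR_iff n e y x).2 (Or.inr ⟨hd.symm, hd ▸ hg⟩)
  · intro x y z h1 h2
    rcases (myR_iff n e x y).1 h1 with h1 | ⟨hd1, hg1⟩
    · exact h1 ▸ h2
    · rcases (myR_iff n e y z).1 h2 with h2 | ⟨hd2, hg2⟩
      · exact h2 ▸ h1
      · exact (myR_iff n e x z).2 (Or.inr ⟨hd1.trans hd2, hg1⟩)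

lemma myDiv {n : ℕ} (hn0 : 0 < n) (k i : ℕ) (hi : i < n) : (n * k + i) / n = k := by
  rw [Nat.mul_add_div hn0, Nat.div_eq_of_lt hi, add_zero]

lemma myMod {n : ℕ} (k i : ℕ) (hi : i < n) : (n * k + i) % n = i := by
  rw [Nat.mul_add_mod, Nat.mod_eq_of_lt hi]

lemma myR_primrec (n : ℕ) : Primrec fun p : ℕ × ℕ × ℕ => myR n p.1 p.2.1 p.2.2 := by
  have hofNat : Primrec (Denumerable.ofNat Nat.Partrec.Code) := Primrec.ofNat _
  have hg : Primrec₂ fun (a : ℕ × ℕ) (x : ℕ) =>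
      Nat.Partrec.Code.evaln a.2 (Denumerable.ofNat Nat.Partrec.Code a.1) x :=
    Nat.Partrec.Code.primrec_evaln.comp <|
      (((Primrec.snd.comp Primrec.fst).pair
        (hofNat.comp (Primrec.fst.comp Primrec.fst))).pair Primrec.snd)
  have hcnt : Primrec₂ myCnt :=
    Primrec.list_length.comp (Primrec.listFilterMap (Primrec.list_range.comp Primrec.snd) hg)
  have hgrows : Primrec₂ myGrows :=
    (Primrec.nat_lt.comp (hcnt.comp Primrec.fst Primrec.snd)
      (hcnt.comp Primrec.fst (Primrec.succ.comp Primrec.snd))).decide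
  have hx : Primrec fun p : ℕ × ℕ × ℕ => p.2.1 := Primrec.fst.comp Primrec.snd
  have hy : Primrec fun p : ℕ × ℕ × ℕ => p.2.2 := Primrec.snd.comp Primrec.snd
  have hxd : Primrec fun p : ℕ × ℕ × ℕ => p.2.1 / n :=
    Primrec.nat_div.comp hx (Primrec.const n)
  have hyd : Primrec fun p : ℕ × ℕ × ℕ => p.2.2 / n :=
    Primrec.nat_div.comp hy (Primrec.const n)
  have h1 : Primrec fun p : ℕ × ℕ × ℕ => decide (p.2.1 = p.2.2) := (Primrec.eq.comp hx hy).decide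
  have h2 : Primrec fun p : ℕ × ℕ × ℕ => decide (p.2.1 / n = p.2.2 / n) :=
    (Primrec.eq.comp hxd hyd).decide
  have h3 : Primrec fun p : ℕ × ℕ × ℕ => myGrows p.1 (p.2.1 / n) :=
    hgrows.comp Primrec.fst hxd
  have hband : ∀ a b : Bool, (bif a then b else false) = (a && b) := by decide
  have hbor : ∀ a b : Bool, (bif a then true else b) = (a || b) := by decide
  have hand : Primrec fun p : ℕ × ℕ × ℕ =>
      (decide (p.2.1 / n = p.2.2 / n) && myGrows p.1 (p.2.1 / n)) :=
    (Primrec.cond h2 h3 (Primrec.const false)).of_eq fun p => hband _ _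
  exact (Primrec.cond h1 (Primrec.const true) hand).of_eq fun p => hbor _ _

lemma biemb_iff (n : ℕ) (hn : 2 ≤ n) (e : ℕ) :
    BiEmb (fun x y => myR n e x y = true) (fun x y => x / n = y / n) ↔
      {s | myGrows e s = true}.Infinite := by
  have hn0 : 0 < n := by omega
  constructor
  · rintro ⟨-, g, hginj, hgrel⟩
    have hdiv1 : ∀ k, (n * k) / n = k := fun k => Nat.mul_div_cancel_left k hn0
    have hdiv2 : ∀ k, (n * k + 1) / n = k := fun k => myDiv hn0 k 1 (by omega)
    have key : ∀ k, g (n * k) / n = g (n * k + 1) / n ∧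
        myGrows e (g (n * k) / n) = true := by
      intro k
      have harg : (n * k) / n = (n * k + 1) / n := by rw [hdiv1, hdiv2]
      have hR : myR n e (g (n * k)) (g (n * k + 1)) = true :=
        (hgrel (n * k) (n * k + 1)).1 harg
      rcases (myR_iff n e _ _).1 hR with h | h
      · exact absurd (hginj h) (by omega)
      · exact h
    apply Set.infinite_of_injective_forall_mem (f := fun k => g (n * k) / n)
    · intro k k' hkk
      have hkk' : g (n * k) / n = g (n * k') / n := hkk
      have hR : myR n e (g (n * k)) (g (n * k')) = true :=
        (myR_iff n e _ _).2 (Or.inr ⟨hkk', (key k).2⟩)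
      have hkeq : (n * k) / n = (n * k') / n := (hgrel (n * k) (n * k')).2 hR
      rw [hdiv1, hdiv1] at hkeq
      exact hkeq
    · exact fun k => (key k).2
  · intro hGinf
    set N : ℕ → ℕ := Nat.nth (fun s => myGrows e s = true) with hNdef
    constructor
    · -- embedding of R_e into A_n
      set f : ℕ → ℕ := fun x => if myGrows e (x / n) = true
        then n * (2 * (x / n)) + x % n else n * (2 * x + 1) with hfdef
      have hfd : ∀ x, f x / n =
          if myGrows e (x / n) = true then 2 * (x / n) else 2 * x + 1 := by
        intro x
        by_cases hx : myGrows e (x / n) = true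
        · rw [hfdef]
          simp only [if_pos hx]
          exact myDiv hn0 _ _ (Nat.mod_lt x hn0)
        · rw [hfdef]
          simp only [if_neg hx]
          exact Nat.mul_div_cancel_left _ hn0
      have hfm : ∀ x, myGrows e (x / n) = true → f x % n = x % n := by
        intro x hx
        rw [hfdef]
        simp only [if_pos hx]
        exact myMod _ _ (Nat.mod_lt x hn0)
      refine ⟨f, ?_, ?_⟩
      · intro x y h
        have hd : f x / n = f y / n := by rw [h]
        have hm : f x % n = f y % n := by rw [h]
        rw [hfd, hfd] at hd
        by_cases hx : myGrows e (x / n) = true <;> by_cases hy : myGrows e (y / n) = true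
        · rw [if_pos hx, if_pos hy] at hd
          rw [hfm x hx, hfm y hy] at hm
          have hdd : x / n = y / n := by omega
          calc x = n * (x / n) + x % n := (Nat.div_add_mod x n).symm
            _ = n * (y / n) + y % n := by rw [hdd, hm]
            _ = y := Nat.div_add_mod y n
        · rw [if_pos hx, if_neg hy] at hd
          omega
        · rw [if_neg hx, if_pos hy] at hd
          omega
        · rw [if_neg hx, if_neg hy] at hd
          omega
      · intro x y
        constructor
        · intro h
          show f x / n = f y / n
          rcases (myR_iff n e x y).1 h with h | ⟨hd, hg⟩
          · rw [h]
          · have hgy : myGrows e (y / n) = true := hd ▸ hg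
            rw [hfd, hfd, if_pos hg, if_pos hgy, hd]
        · intro h
          have hd : f x / n = f y / n := h
          rw [hfd, hfd] at hd
          by_cases hx : myGrows e (x / n) = true <;> by_cases hy : myGrows e (y / n) = true
          · rw [if_pos hx, if_pos hy] at hd
            exact (myR_iff n e x y).2 (Or.inr ⟨by omega, hx⟩)
          · rw [if_pos hx, if_neg hy] at hd
            omega
          · rw [if_neg hx, if_pos hy] at hd
            omega
          · rw [if_neg hx, if_neg hy] at hd
            exact (myR_iff n e x y).2 (Or.inl (by omega))
    · -- embedding of A_n into R_e
      set g : ℕ → ℕ := fun x => n * N (x / n) + x % n with hgdef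
      have hgd : ∀ x, g x / n = N (x / n) := fun x => myDiv hn0 _ _ (Nat.mod_lt x hn0)
      have hgm : ∀ x, g x % n = x % n := fun x => myMod _ _ (Nat.mod_lt x hn0)
      refine ⟨g, ?_, ?_⟩
      · intro x y h
        have hd : g x / n = g y / n := by rw [h]
        have hm : g x % n = g y % n := by rw [h]
        rw [hgd, hgd] at hd
        rw [hgm, hgm] at hm
        have hdd : x / n = y / n := Nat.nth_injective hGinf hd
        calc x = n * (x / n) + x % n := (Nat.div_add_mod x n).symm
          _ = n * (y / n) + y % n := by rw [hdd, hm]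
          _ = y := Nat.div_add_mod y n
      · intro x y
        constructor
        · intro hxy
          have hxy' : x / n = y / n := hxy
          refine (myR_iff n e _ _).2 (Or.inr ?_)
          rw [hgd, hgd, hxy']
          exact ⟨rfl, Nat.nth_mem_of_infinite hGinf _⟩
        · intro h
          show x / n = y / n
          rcases (myR_iff n e _ _).1 h with h | ⟨hd, -⟩
          · have hdN : g x / n = g y / n := by rw [h]
            rw [hgd, hgd] at hdN
            exact Nat.nth_injective hGinf hdN
          · rw [hgd, hgd] at hd
            exact Nat.nth_injective hGinf hd

/-- For `A_n` (infinitely many classes, all of size exactly `n ≥ 2`) there is a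
uniformly computable family `(R_e)` of equivalence relations with
`R_e` bi-embeddable with `A_n` iff `W_e` is infinite. -/
theorem stmt13 (n : ℕ) (hn : 2 ≤ n) :
    ∃ R : ℕ → ℕ → ℕ → Bool,
      Computable (fun p : ℕ × ℕ × ℕ => R p.1 p.2.1 p.2.2) ∧
      (∀ e, Equivalence (fun x y => R e x y = true)) ∧
      (∀ e, BiEmb (fun x y => R e x y = true) (fun x y => x / n = y / n) ↔
        (W e).Infinite) := by
  refine ⟨myR n, (myR_primrec n).to_comp, fun e => myR_equiv n e, fun e =>
    (biemb_iff n hn e).trans (grows_infinite_iff_W_infinite e)⟩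
end

section
/- For every total computable predicate S : ℕ → ℕ → ℕ → ℕ → ℕ → Bool there is a uniformly computable family of equivalence relations (R_e)_{e∈ℕ} on ℕ such that for every e: R_e has infinitely many infinite equivalence classes if and only if for all x there exists y such that for all u there exists v with S x y u v e = true. -/
set_option maxHeartbeats 1000000

namespace Stmt15Aux

/-- bounded exists -/
def bex0 (f : ℕ → Bool) : ℕ → Bool :=
  fun n => Nat.rec false (fun k ih => ih || f k) n

/-- bounded forall -/
def ball0 (f : ℕ → Bool) (n : ℕ) : Bool := !(bex0 (fun k => !(f k)) n)

/-- bounded count -/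
def bcnt (f : ℕ → Bool) : ℕ → ℕ :=
  fun n => Nat.rec 0 (fun k ih => ih + (cond (f k) 1 0)) n

/-- least witness below n (n if none) -/
def bleast (f : ℕ → Bool) (n : ℕ) : ℕ := bcnt (fun k => !(bex0 f (k + 1))) n

theorem bex0_iff (f : ℕ → Bool) (n : ℕ) : bex0 f n = true ↔ ∃ k < n, f k = true := by
  induction n with
  | zero => simp [bex0]
  | succ n ih =>
    show (bex0 f n || f n) = true ↔ _
    rw [Bool.or_eq_true, ih]
    constructor
    · rintro (⟨k, hk, h⟩ | h)
      · exact ⟨k, Nat.lt_succ_of_lt hk, h⟩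
      · exact ⟨n, Nat.lt_succ_self n, h⟩
    · rintro ⟨k, hk, h⟩
      rcases Nat.lt_succ_iff_lt_or_eq.1 hk with h' | rfl
      · exact Or.inl ⟨k, h', h⟩
      · exact Or.inr h

theorem ball0_iff (f : ℕ → Bool) (n : ℕ) : ball0 f n = true ↔ ∀ k < n, f k = true := by
  unfold ball0
  rw [Bool.not_eq_true', ← Bool.not_eq_true, bex0_iff]
  push_neg
  constructor
  · intro h k hk
    have := h k hk
    simpa using this
  · intro h k hk
    simp [h k hk]

theorem bcnt_eq (f : ℕ → Bool) (n : ℕ) :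
    bcnt f n = ((Finset.range n).filter (fun k => f k = true)).card := by
  induction n with
  | zero => simp [bcnt]
  | succ n ih =>
    show bcnt f n + (cond (f n) 1 0) = _
    rw [ih, Finset.range_add_one, Finset.filter_insert]
    by_cases h : f n = true
    · rw [if_pos h, Finset.card_insert_of_notMem
        (fun hc => absurd (Finset.mem_range.1 (Finset.mem_filter.1 hc).1) (lt_irrefl n))]
      simp [h]
    · rw [if_neg h]
      rw [Bool.not_eq_true] at h
      simp [h]

theorem bleast_spec {f : ℕ → Bool} {n : ℕ} (h : ∃ k < n, f k = true) :
    bleast f n < n ∧ f (bleast f n) = true ∧ ∀ j < bleast f n, f j ≠ true := by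
  obtain ⟨k, hkn, hk⟩ := h
  have hex : ∃ k, f k = true := ⟨k, hk⟩
  set k0 := Nat.find hex with hk0
  have hk0le : k0 ≤ k := Nat.find_min' hex hk
  have hk0n : k0 < n := lt_of_le_of_lt hk0le hkn
  have hpred : ∀ m, ((fun k => !(bex0 f (k + 1))) m = true) ↔ m < k0 := by
    intro m
    rw [Bool.not_eq_true', ← Bool.not_eq_true, bex0_iff]
    push_neg
    constructor
    · intro hm
      by_contra hc
      push_neg at hc
      exact absurd (Nat.find_spec hex) (by simpa using hm k0 (Nat.lt_succ_of_le hc))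
    · intro hm j hj hfj
      exact Nat.find_min hex (lt_of_le_of_lt (Nat.lt_succ_iff.1 hj) hm) hfj
  have : bleast f n = k0 := by
    unfold bleast
    rw [bcnt_eq]
    have : (Finset.range n).filter (fun m => (!(bex0 f (m + 1))) = true) = Finset.range k0 := by
      ext m
      simp only [Finset.mem_filter, Finset.mem_range]
      constructor
      · rintro ⟨_, hm⟩
        exact (hpred m).1 hm
      · intro hm
        exact ⟨lt_trans hm hk0n, (hpred m).2 hm⟩
    rw [this, Finset.card_range]
  rw [this]
  exact ⟨hk0n, Nat.find_spec hex, fun j hj => Nat.find_min hex hj⟩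


section comp

open Computable
variable {α : Type*} [Primcodable α]

theorem bex0_comp {f : α → ℕ → Bool} (hf : Computable₂ f) :
    Computable₂ fun a n => bex0 (f a) n := by
  have h : Computable₂ fun (p : α × ℕ) (q : ℕ × Bool) => q.2 || f p.1 q.1 :=
    Primrec.or.to_comp.comp₂ (snd.comp snd).to₂ (hf.comp (fst.comp fst) (fst.comp snd)).to₂
  have := Computable.nat_rec (f := fun p : α × ℕ => p.2)
    (g := fun _ : α × ℕ => (false : Bool))
    (h := fun (p : α × ℕ) (q : ℕ × Bool) => q.2 || f p.1 q.1)
    snd (const false) h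
  exact this.of_eq fun p => rfl

theorem bcnt_comp {f : α → ℕ → Bool} (hf : Computable₂ f) :
    Computable₂ fun a n => bcnt (f a) n := by
  have h : Computable₂ fun (p : α × ℕ) (q : ℕ × ℕ) => q.2 + cond (f p.1 q.1) 1 0 :=
    Primrec.nat_add.to_comp.comp₂ (snd.comp snd).to₂
      ((Computable.cond (hf.comp (fst.comp fst) (fst.comp snd)) (const 1) (const 0)).to₂)
  have := Computable.nat_rec (f := fun p : α × ℕ => p.2)
    (g := fun _ : α × ℕ => (0 : ℕ))
    (h := fun (p : α × ℕ) (q : ℕ × ℕ) => q.2 + cond (f p.1 q.1) 1 0)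
    snd (const 0) h
  exact this.of_eq fun p => rfl

theorem not_comp : Computable Bool.not := Primrec.not.to_comp

theorem ball0_comp {f : α → ℕ → Bool} (hf : Computable₂ f) :
    Computable₂ fun a n => ball0 (f a) n :=
  not_comp.comp₂ (bex0_comp (not_comp.comp₂ hf))

theorem bleast_comp {f : α → ℕ → Bool} (hf : Computable₂ f) :
    Computable₂ fun a n => bleast (f a) n :=
  bcnt_comp (not_comp.comp₂ (((bex0_comp hf).comp fst (Computable.succ.comp snd)).to₂))

end comp


/-! ### The construction -/

def wI : ℕ → ℕ → ℕ :=
  fun i c => (Nat.rec (motive := fun _ => ℕ) c (fun _ ih => (Nat.unpair ih).2) i).unpair.1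

def cOf : List ℕ → ℕ
  | [] => 0
  | y :: l => Nat.pair y (cOf l)

theorem wI_zero (c : ℕ) : wI 0 c = c.unpair.1 := rfl

private def stc (c i : ℕ) : ℕ := Nat.rec (motive := fun _ => ℕ) c (fun _ ih => (Nat.unpair ih).2) i

private theorem stc_shift (i c : ℕ) : stc c.unpair.2 i = stc c (i + 1) := by
  induction i with
  | zero => rfl
  | succ i ih =>
    show (Nat.unpair (stc c.unpair.2 i)).2 = (Nat.unpair (stc c (i+1))).2
    rw [ih]

theorem wI_succ (i c : ℕ) : wI (i + 1) c = wI i c.unpair.2 := by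
  show (stc c (i+1)).unpair.1 = (stc c.unpair.2 i).unpair.1
  rw [stc_shift]

theorem wI_cOf : ∀ (l : List ℕ) (i : ℕ), i < l.length → wI i (cOf l) = l.getD i 0 := by
  intro l
  induction l with
  | nil => intro i h; simp at h
  | cons y l ih =>
    intro i h
    cases i with
    | zero => simp [wI_zero, cOf, Nat.unpair_pair]
    | succ i =>
      rw [wI_succ]
      simp only [cOf, Nat.unpair_pair]
      exact (by simpa using ih i (by simpa using h))

variable (S : ℕ → ℕ → ℕ → ℕ → ℕ → Bool)

def wit (e x c u s : ℕ) : Bool :=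
  ball0 (fun x' => bex0 (fun v => S x' (wI x' c) u v e) (s + 1)) (x + 1)

def gg (e x c s : ℕ) : ℕ :=
  bcnt (fun u => ball0 (fun u' => wit S e x c u' s) (u + 1)) (s + 1)

def actb (e x s : ℕ) : Bool :=
  bex0 (fun c => decide (gg S e x c s < gg S e x c (s + 1))) (s + 1)

def lA (e x s : ℕ) : ℕ :=
  bleast (fun c => decide (gg S e x c s < gg S e x c (s + 1))) (s + 1)

def cntF (e x s : ℕ) : ℕ :=
  bcnt (fun t => actb S e x t && decide (lA S e x t < lA S e x s)) s

def LL (e m : ℕ) : ℕ :=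
  cond (actb S e m.unpair.1 m.unpair.2)
    (Nat.pair 0 (Nat.pair m.unpair.1
      (Nat.pair (lA S e m.unpair.1 m.unpair.2) (cntF S e m.unpair.1 m.unpair.2))))
    (Nat.pair 1 m)

def RR (e m n : ℕ) : Bool := decide (LL S e m = LL S e n)

attribute [irreducible] wit gg actb lA cntF LL RR


section computability
open Computable
variable {S : ℕ → ℕ → ℕ → ℕ → ℕ → Bool}

theorem wI_comp : Computable₂ wI := by
  have := Computable.nat_rec (f := fun p : ℕ × ℕ => p.1) (g := fun p : ℕ × ℕ => p.2)
    (h := fun (_ : ℕ × ℕ) (q : ℕ × ℕ) => (Nat.unpair q.2).2)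
    fst snd ((snd.comp (unpair.comp (snd.comp snd))).to₂)
  exact (fst.comp (unpair.comp this)).to₂


variable (hS : Computable (fun q : ℕ × ℕ × ℕ × ℕ × ℕ => S q.1 q.2.1 q.2.2.1 q.2.2.2.1 q.2.2.2.2))
include hS

theorem wit_comp :
    Computable (fun p : ℕ × ℕ × ℕ × ℕ × ℕ => wit S p.1 p.2.1 p.2.2.1 p.2.2.2.1 p.2.2.2.2) := by
  unfold wit
  -- p = (e, x, c, u, s)
  have pe : Computable (fun p : ℕ × ℕ × ℕ × ℕ × ℕ => p.1) := fst
  have px : Computable (fun p : ℕ × ℕ × ℕ × ℕ × ℕ => p.2.1) := fst.comp snd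
  have pc : Computable (fun p : ℕ × ℕ × ℕ × ℕ × ℕ => p.2.2.1) := fst.comp (snd.comp snd)
  have pu : Computable (fun p : ℕ × ℕ × ℕ × ℕ × ℕ => p.2.2.2.1) :=
    fst.comp (snd.comp (snd.comp snd))
  have ps : Computable (fun p : ℕ × ℕ × ℕ × ℕ × ℕ => p.2.2.2.2) :=
    snd.comp (snd.comp (snd.comp snd))
  -- innermost : fun (q : (P×ℕ)) v => S q.2 (wI q.2 q.1.c) q.1.u v q.1.e
  have hin : Computable₂ fun (q : (ℕ × ℕ × ℕ × ℕ × ℕ) × ℕ) (v : ℕ) =>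
      S q.2 (wI q.2 q.1.2.2.1) q.1.2.2.2.1 v q.1.1 := by
    have harg : Computable fun (r : ((ℕ × ℕ × ℕ × ℕ × ℕ) × ℕ) × ℕ) =>
        ((r.1.2 : ℕ), ((wI r.1.2 r.1.1.2.2.1 : ℕ), ((r.1.1.2.2.2.1 : ℕ), ((r.2 : ℕ), (r.1.1.1 : ℕ))))) := by
      exact Computable.pair (snd.comp fst)
        (Computable.pair (wI_comp.comp (snd.comp fst) (pc.comp (fst.comp fst)))
          (Computable.pair (pu.comp (fst.comp fst))
            (Computable.pair snd (pe.comp (fst.comp fst)))))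
    exact (hS.comp harg).to₂
  -- bexin : fun (q : P×ℕ) n => bex0 ... n ; applied at q.1.s + 1
  have hbex : Computable₂ fun (p : ℕ × ℕ × ℕ × ℕ × ℕ) (x' : ℕ) =>
      bex0 (fun v => S x' (wI x' p.2.2.1) p.2.2.2.1 v p.1) (p.2.2.2.2 + 1) :=
    ((bex0_comp hin).comp Computable.id (succ.comp (ps.comp fst))).to₂
  exact (ball0_comp hbex).comp Computable.id (succ.comp px)

theorem gg_comp :
    Computable (fun p : ℕ × ℕ × ℕ × ℕ => gg S p.1 p.2.1 p.2.2.1 p.2.2.2) := by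
  unfold gg
  -- p = (e, x, c, s)
  have pe : Computable (fun p : ℕ × ℕ × ℕ × ℕ => p.1) := fst
  have px : Computable (fun p : ℕ × ℕ × ℕ × ℕ => p.2.1) := fst.comp snd
  have pc : Computable (fun p : ℕ × ℕ × ℕ × ℕ => p.2.2.1) := fst.comp (snd.comp snd)
  have ps : Computable (fun p : ℕ × ℕ × ℕ × ℕ => p.2.2.2) := snd.comp (snd.comp snd)
  have hwit : Computable₂ fun (q : (ℕ × ℕ × ℕ × ℕ) × ℕ) (u' : ℕ) =>
      wit S q.1.1 q.1.2.1 q.1.2.2.1 u' q.1.2.2.2 := by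
    have harg : Computable fun (r : ((ℕ × ℕ × ℕ × ℕ) × ℕ) × ℕ) =>
        ((r.1.1.1 : ℕ), ((r.1.1.2.1 : ℕ), ((r.1.1.2.2.1 : ℕ), ((r.2 : ℕ), (r.1.1.2.2.2 : ℕ))))) :=
      Computable.pair (pe.comp (fst.comp fst))
        (Computable.pair (px.comp (fst.comp fst))
          (Computable.pair (pc.comp (fst.comp fst))
            (Computable.pair snd (ps.comp (fst.comp fst)))))
    exact ((wit_comp hS).comp harg).to₂
  have hball : Computable₂ fun (p : ℕ × ℕ × ℕ × ℕ) (u : ℕ) =>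
      ball0 (fun u' => wit S p.1 p.2.1 p.2.2.1 u' p.2.2.2) (u + 1) :=
    ((ball0_comp hwit).comp Computable.id (succ.comp snd)).to₂
  exact (bcnt_comp hball).comp Computable.id (succ.comp ps)

theorem ggp_comp : Computable₂ fun (p : ℕ × ℕ × ℕ) (c : ℕ) =>
    (decide (gg S p.1 p.2.1 c p.2.2 < gg S p.1 p.2.1 c (p.2.2 + 1)) : Bool) := by
  -- p = (e, x, s) ; q = (p, c)
  have harg1 : Computable fun (q : (ℕ × ℕ × ℕ) × ℕ) =>
      ((q.1.1 : ℕ), ((q.1.2.1 : ℕ), ((q.2 : ℕ), (q.1.2.2 : ℕ)))) :=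
    Computable.pair (fst.comp fst)
      (Computable.pair (fst.comp (snd.comp fst))
        (Computable.pair snd (snd.comp (snd.comp fst))))
  have harg2 : Computable fun (q : (ℕ × ℕ × ℕ) × ℕ) =>
      ((q.1.1 : ℕ), ((q.1.2.1 : ℕ), ((q.2 : ℕ), (q.1.2.2 + 1 : ℕ)))) :=
    Computable.pair (fst.comp fst)
      (Computable.pair (fst.comp (snd.comp fst))
        (Computable.pair snd (succ.comp (snd.comp (snd.comp fst)))))
  have h1 : Computable fun (q : (ℕ × ℕ × ℕ) × ℕ) => gg S q.1.1 q.1.2.1 q.2 q.1.2.2 := by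
    have := (gg_comp hS).comp harg1
    exact this.of_eq fun q => rfl
  have h2 : Computable fun (q : (ℕ × ℕ × ℕ) × ℕ) => gg S q.1.1 q.1.2.1 q.2 (q.1.2.2 + 1) := by
    have := (gg_comp hS).comp harg2
    exact this.of_eq fun q => rfl
  have := Primrec.nat_lt.decide.to_comp.comp h1 h2
  exact this.of_eq fun q => rfl

theorem actb_comp : Computable (fun p : ℕ × ℕ × ℕ => actb S p.1 p.2.1 p.2.2) := by
  unfold actb
  have := (bex0_comp (ggp_comp hS)).comp Computable.id (succ.comp (snd.comp snd))
  exact this.of_eq fun p => rfl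

theorem lA_comp : Computable (fun p : ℕ × ℕ × ℕ => lA S p.1 p.2.1 p.2.2) := by
  unfold lA
  have := (bleast_comp (ggp_comp hS)).comp Computable.id (succ.comp (snd.comp snd))
  exact this.of_eq fun p => rfl

theorem cntF_comp : Computable (fun p : ℕ × ℕ × ℕ => cntF S p.1 p.2.1 p.2.2) := by
  unfold cntF
  have hargt : Computable fun (q : (ℕ × ℕ × ℕ) × ℕ) =>
      ((q.1.1 : ℕ), ((q.1.2.1 : ℕ), (q.2 : ℕ))) :=
    Computable.pair (fst.comp fst) (Computable.pair (fst.comp (snd.comp fst)) snd)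
  have h1 : Computable fun (q : (ℕ × ℕ × ℕ) × ℕ) => actb S q.1.1 q.1.2.1 q.2 := by
    have := (actb_comp hS).comp hargt
    exact this.of_eq fun q => rfl
  have h2 : Computable fun (q : (ℕ × ℕ × ℕ) × ℕ) => lA S q.1.1 q.1.2.1 q.2 := by
    have := (lA_comp hS).comp hargt
    exact this.of_eq fun q => rfl
  have h3 : Computable fun (q : (ℕ × ℕ × ℕ) × ℕ) => lA S q.1.1 q.1.2.1 q.1.2.2 := by
    have := (lA_comp hS).comp (fst (β := ℕ))
    exact this.of_eq fun q => rfl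
  have hpred : Computable₂ fun (p : ℕ × ℕ × ℕ) (t : ℕ) =>
      (actb S p.1 p.2.1 t && decide (lA S p.1 p.2.1 t < lA S p.1 p.2.1 p.2.2) : Bool) := by
    have := Primrec.and.to_comp.comp h1 (Primrec.nat_lt.decide.to_comp.comp h2 h3)
    exact this.of_eq fun q => rfl
  have := (bcnt_comp hpred).comp Computable.id (snd.comp snd)
  exact this.of_eq fun p => rfl

theorem LL_comp : Computable₂ (LL S) := by
  show Computable fun p : ℕ × ℕ => LL S p.1 p.2
  unfold LL
  have hx : Computable fun (p : ℕ × ℕ) => p.2.unpair.1 := fst.comp (unpair.comp snd)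
  have hs : Computable fun (p : ℕ × ℕ) => p.2.unpair.2 := snd.comp (unpair.comp snd)
  have harg : Computable fun (p : ℕ × ℕ) =>
      ((p.1 : ℕ), ((p.2.unpair.1 : ℕ), (p.2.unpair.2 : ℕ))) :=
    Computable.pair fst (Computable.pair hx hs)
  have hact : Computable fun (p : ℕ × ℕ) => actb S p.1 p.2.unpair.1 p.2.unpair.2 := by
    have := (actb_comp hS).comp harg
    exact this.of_eq fun p => rfl
  have hlA : Computable fun (p : ℕ × ℕ) => lA S p.1 p.2.unpair.1 p.2.unpair.2 := by
    have := (lA_comp hS).comp harg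
    exact this.of_eq fun p => rfl
  have hcnt : Computable fun (p : ℕ × ℕ) => cntF S p.1 p.2.unpair.1 p.2.unpair.2 := by
    have := (cntF_comp hS).comp harg
    exact this.of_eq fun p => rfl
  have hval : Computable fun (p : ℕ × ℕ) =>
      Nat.pair 0 (Nat.pair p.2.unpair.1
        (Nat.pair (lA S p.1 p.2.unpair.1 p.2.unpair.2) (cntF S p.1 p.2.unpair.1 p.2.unpair.2))) :=
    Primrec₂.natPair.to_comp.comp (const 0)
      (Primrec₂.natPair.to_comp.comp hx (Primrec₂.natPair.to_comp.comp hlA hcnt))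
  have hother : Computable fun (p : ℕ × ℕ) => Nat.pair 1 p.2 :=
    Primrec₂.natPair.to_comp.comp (const 1) snd
  have := Computable.cond hact hval hother
  exact this.of_eq fun p => rfl

theorem RR_comp : Computable (fun p : ℕ × ℕ × ℕ => RR S p.1 p.2.1 p.2.2) := by
  unfold RR
  have h1 : Computable fun (p : ℕ × ℕ × ℕ) => LL S p.1 p.2.1 := by
    have := (LL_comp hS).comp (fst (β := ℕ × ℕ)) (fst.comp snd)
    exact this.of_eq fun p => rfl
  have h2 : Computable fun (p : ℕ × ℕ × ℕ) => LL S p.1 p.2.2 := by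
    have := (LL_comp hS).comp (fst (β := ℕ × ℕ)) (snd.comp snd)
    exact this.of_eq fun p => rfl
  have := (Primrec.eq (α := ℕ)).decide.to_comp.comp h1 h2
  exact this.of_eq fun p => rfl

end computability

/-! ### Specification lemmas -/

section spec

variable (S : ℕ → ℕ → ℕ → ℕ → ℕ → Bool) (e x : ℕ)

/-- the target Π⁰₂ predicate for witness `c` at level `x` -/
def Gd (c : ℕ) : Prop := ∀ x' ≤ x, ∀ u, ∃ v, S x' (wI x' c) u v e = true

/-- `c` is active at stage `s` -/
def ActP (c s : ℕ) : Prop := c ≤ s ∧ gg S e x c s < gg S e x c (s + 1)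

theorem wit_iff (c u s : ℕ) :
    wit S e x c u s = true ↔ ∀ x' ≤ x, ∃ v ≤ s, S x' (wI x' c) u v e = true := by
  unfold wit
  simp only [ball0_iff, bex0_iff, Nat.lt_succ_iff]

theorem wit_mono {c u s t : ℕ} (h : s ≤ t) (hw : wit S e x c u s = true) :
    wit S e x c u t = true := by
  rw [wit_iff] at *
  intro x' hx'
  obtain ⟨v, hv, hS⟩ := hw x' hx'
  exact ⟨v, le_trans hv h, hS⟩

theorem gg_eq (c s : ℕ) :
    gg S e x c s = ((Finset.range (s + 1)).filter
      (fun u => ball0 (fun u' => wit S e x c u' s) (u + 1) = true)).card := by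
  unfold gg
  rw [bcnt_eq]

theorem gg_mono (c : ℕ) {s t : ℕ} (h : s ≤ t) : gg S e x c s ≤ gg S e x c t := by
  rw [gg_eq, gg_eq]
  apply Finset.card_le_card
  intro u hu
  rw [Finset.mem_filter, Finset.mem_range] at *
  obtain ⟨h1, h2⟩ := hu
  refine ⟨lt_of_lt_of_le h1 (by omega), ?_⟩
  rw [ball0_iff] at *
  intro k hk
  exact wit_mono S e x h (h2 k hk)

theorem gg_unbounded_iff (c : ℕ) :
    (∀ n, ∃ s, n ≤ gg S e x c s) ↔ Gd S e x c := by
  constructor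
  · intro h x' hx' u
    obtain ⟨s, hs⟩ := h (u + 2)
    rw [gg_eq] at hs
    -- there is an element of the filter that is > u
    have hex : ∃ m ∈ (Finset.range (s + 1)).filter
        (fun m => ball0 (fun u' => wit S e x c u' s) (m + 1) = true), u < m := by
      by_contra hc
      push_neg at hc
      have hsub : (Finset.range (s + 1)).filter
          (fun m => ball0 (fun u' => wit S e x c u' s) (m + 1) = true) ⊆
          Finset.range (u + 1) := by
        intro m hm
        exact Finset.mem_range.2 (Nat.lt_succ_of_le (hc m hm))
      have := Finset.card_le_card hsub
      rw [Finset.card_range] at this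
      omega
    obtain ⟨m, hm, hum⟩ := hex
    rw [Finset.mem_filter, ball0_iff] at hm
    have hwit := hm.2 u (by omega)
    rw [wit_iff] at hwit
    obtain ⟨v, _, hv⟩ := hwit x' hx'
    exact ⟨v, hv⟩
  · intro h n
    -- each u has a stage where it is witnessed
    have hstage : ∀ u, ∃ s, wit S e x c u s = true := by
      intro u
      have hch : ∀ x' ≤ x, ∃ v, S x' (wI x' c) u v e = true := fun x' hx' => h x' hx' u
      classical
      set f : ℕ → ℕ := fun x' => if h' : x' ≤ x then (hch x' h').choose else 0 with hf
      refine ⟨(Finset.range (x + 1)).sup f, ?_⟩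
      rw [wit_iff]
      intro x' hx'
      refine ⟨f x', Finset.le_sup (Finset.mem_range.2 (Nat.lt_succ_of_le hx')), ?_⟩
      rw [hf]
      simp only [dif_pos hx']
      exact (hch x' hx').choose_spec
    classical
    set g : ℕ → ℕ := fun u => (hstage u).choose with hg
    set s := (Finset.range n).sup g ⊔ n with hs
    refine ⟨s, ?_⟩
    rw [gg_eq]
    have hsub : Finset.range n ⊆ (Finset.range (s + 1)).filter
        (fun u => ball0 (fun u' => wit S e x c u' s) (u + 1) = true) := by
      intro u hu
      rw [Finset.mem_range] at hu
      rw [Finset.mem_filter, Finset.mem_range, ball0_iff]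
      constructor
      · have : n ≤ s := le_sup_right
        omega
      · intro k hk
        have hks : g k ≤ s := le_trans (Finset.le_sup (Finset.mem_range.2 (by omega))) le_sup_left
        exact wit_mono S e x hks (hstage k).choose_spec
    have := Finset.card_le_card hsub
    rwa [Finset.card_range] at this

theorem actb_iff (s : ℕ) : actb S e x s = true ↔ ∃ c, ActP S e x c s := by
  unfold actb
  rw [bex0_iff]
  constructor
  · rintro ⟨c, hc, hdec⟩
    exact ⟨c, Nat.lt_succ_iff.1 hc, of_decide_eq_true hdec⟩
  · rintro ⟨c, hc1, hc2⟩
    exact ⟨c, Nat.lt_succ_of_le hc1, decide_eq_true hc2⟩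

theorem lA_spec {s : ℕ} (h : actb S e x s = true) :
    ActP S e x (lA S e x s) s ∧
      ∀ c < lA S e x s, ¬(gg S e x c s < gg S e x c (s + 1)) := by
  rw [actb_iff] at h
  obtain ⟨c, hc1, hc2⟩ := h
  have hex : ∃ k < s + 1, (fun c => decide (gg S e x c s < gg S e x c (s + 1))) k = true :=
    ⟨c, Nat.lt_succ_of_le hc1, decide_eq_true hc2⟩
  obtain ⟨h1, h2, h3⟩ := bleast_spec hex
  unfold lA
  refine ⟨⟨Nat.lt_succ_iff.1 h1, of_decide_eq_true h2⟩, ?_⟩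
  intro c' hc' hgg
  exact h3 c' hc' (decide_eq_true hgg)

theorem cntF_eq (s : ℕ) :
    cntF S e x s = ((Finset.range s).filter
      (fun t => (actb S e x t && decide (lA S e x t < lA S e x s)) = true)).card := by
  unfold cntF
  rw [bcnt_eq]

theorem incr_infinite_iff (c : ℕ) :
    {s | ActP S e x c s}.Infinite ↔ (∀ n, ∃ s, n ≤ gg S e x c s) := by
  constructor
  · intro hinf n
    induction n with
    | zero => exact ⟨0, Nat.zero_le _⟩
    | succ n ih =>
      obtain ⟨s, hs⟩ := ih
      obtain ⟨t, ht, hst⟩ := hinf.exists_gt s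
      refine ⟨t + 1, ?_⟩
      have h1 : gg S e x c s ≤ gg S e x c t := gg_mono S e x c (le_of_lt hst)
      have h2 := ht.2
      omega
  · intro h
    by_contra hni
    rw [Set.not_infinite] at hni
    have hfin := hni
    obtain ⟨B, hB⟩ := hfin.bddAbove
    set M := B ⊔ c with hM
    have hbnd : ∀ k, gg S e x c (M + 1 + k) ≤ gg S e x c (M + 1) := by
      intro k
      induction k with
      | zero => exact le_refl _
      | succ k ih =>
        have hnotact : ¬ActP S e x c (M + 1 + k) := by
          intro hact
          have := hB hact
          omega
        have h2 : ¬(gg S e x c (M + 1 + k) < gg S e x c (M + 1 + k + 1)) := by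
          intro hlt
          exact hnotact ⟨by omega, hlt⟩
        rw [show M + 1 + (k + 1) = M + 1 + k + 1 by omega]
        omega
    obtain ⟨s, hs⟩ := h (gg S e x c (M + 1) + 1)
    rcases le_or_gt s (M + 1) with hle | hlt
    · have := gg_mono S e x c hle
      omega
    · have := hbnd (s - (M + 1))
      rw [show M + 1 + (s - (M + 1)) = s by omega] at this
      omega

end spec

/-! ### Per-level fiber analysis -/

section fiber

variable (S : ℕ → ℕ → ℕ → ℕ → ℕ → Bool) (e x : ℕ)

/-- stages where the label of level `x` is `v` -/
def Dv (v : ℕ) : Set ℕ := {s | actb S e x s = true ∧ lA S e x s = v}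

/-- stages contributing to the fiber `(v, n)` at level `x` -/
def SF (v n : ℕ) : Set ℕ :=
  {s | actb S e x s = true ∧ lA S e x s = v ∧ cntF S e x s = n}

theorem SF_subset_ActP (v n : ℕ) : SF S e x v n ⊆ {s | ActP S e x v s} := by
  rintro s ⟨h1, h2, _⟩
  have := (lA_spec S e x h1).1
  rwa [h2] at this

theorem K1 {v n : ℕ} (h : (SF S e x v n).Infinite) : Gd S e x v := by
  rw [← gg_unbounded_iff, ← incr_infinite_iff]
  exact h.mono (SF_subset_ActP S e x v n)

theorem Dv_mono_cnt {s t v : ℕ} (hs : s ∈ Dv S e x v) (ht : t ∈ Dv S e x v) (hst : s ≤ t) :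
    cntF S e x s ≤ cntF S e x t := by
  rw [cntF_eq, cntF_eq]
  apply Finset.card_le_card
  intro r hr
  rw [Finset.mem_filter, Finset.mem_range, Bool.and_eq_true, decide_eq_true_eq] at *
  refine ⟨by omega, hr.2.1, ?_⟩
  rw [ht.2, ← hs.2]
  exact hr.2.2

theorem K2 (h : ∃ c, Gd S e x c) : ∃ v n, (SF S e x v n).Infinite := by
  classical
  have hex : ∃ c, {s | ActP S e x c s}.Infinite := by
    obtain ⟨c, hc⟩ := h
    exact ⟨c, (incr_infinite_iff S e x c).2 ((gg_unbounded_iff S e x c).2 hc)⟩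
  set c₀ := Nat.find hex with hc₀
  have hc₀inf : {s | ActP S e x c₀ s}.Infinite := Nat.find_spec hex
  have hBfin : {s | ∃ c < c₀, ActP S e x c s}.Finite := by
    have : {s | ∃ c < c₀, ActP S e x c s} =
        ⋃ c ∈ Finset.range c₀, {s | ActP S e x c s} := by
      ext s
      simp only [Set.mem_setOf_eq, Set.mem_iUnion, Finset.mem_range, Finset.coe_sort_coe]
      tauto
    rw [this]
    apply Set.Finite.biUnion (Finset.range c₀).finite_toSet
    intro c hc
    rw [Finset.mem_coe, Finset.mem_range] at hc
    exact Set.not_infinite.1 (Nat.find_min hex hc)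
  have hDc₀ : (Dv S e x c₀).Infinite := by
    apply ((hc₀inf.diff hBfin).mono ?_)
    rintro s ⟨hact, hnb⟩
    have hab : actb S e x s = true := (actb_iff S e x s).2 ⟨c₀, hact⟩
    refine ⟨hab, ?_⟩
    obtain ⟨hActlA, hmin⟩ := lA_spec S e x hab
    rcases lt_trichotomy (lA S e x s) c₀ with hlt | heq | hgt
    · exfalso
      exact hnb ⟨lA S e x s, hlt, hActlA⟩
    · exact heq
    · exfalso
      exact hmin c₀ hgt hact.2
  -- least recurring value
  have hav : ∃ v, (Dv S e x v).Infinite := ⟨c₀, hDc₀⟩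
  set av := Nat.find hav with hav'
  have havinf : (Dv S e x av).Infinite := Nat.find_spec hav
  have hNfin : {t | actb S e x t = true ∧ lA S e x t < av}.Finite := by
    have : {t | actb S e x t = true ∧ lA S e x t < av} =
        ⋃ v ∈ Finset.range av, Dv S e x v := by
      ext t
      simp only [Set.mem_setOf_eq, Set.mem_iUnion, Finset.mem_range, Finset.coe_sort_coe]
      constructor
      · rintro ⟨h1, h2⟩; exact ⟨lA S e x t, h2, h1, rfl⟩
      · rintro ⟨v, hv, h1, h2⟩; exact ⟨h1, h2 ▸ hv⟩
    rw [this]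
    apply Set.Finite.biUnion (Finset.range av).finite_toSet
    intro v hv
    rw [Finset.mem_coe, Finset.mem_range] at hv
    exact Set.not_infinite.1 (Nat.find_min hav hv)
  set NF := hNfin.toFinset with hNF
  refine ⟨av, NF.card, ?_⟩
  have hsmallfin : {s : ℕ | ∃ t ∈ NF, s ≤ t}.Finite := by
    have : {s : ℕ | ∃ t ∈ NF, s ≤ t} = ⋃ t ∈ NF, Set.Iic t := by
      ext s
      simp [Set.mem_iUnion]
    rw [this]
    exact Set.Finite.biUnion NF.finite_toSet (fun t _ => Set.finite_Iic t)
  apply ((havinf.diff hsmallfin).mono ?_)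
  rintro s ⟨⟨hact, hlA⟩, hbig⟩
  refine ⟨hact, hlA, ?_⟩
  rw [cntF_eq]
  congr 1
  apply Finset.ext
  intro t
  rw [Finset.mem_filter, Finset.mem_range, Bool.and_eq_true, decide_eq_true_eq, hlA]
  constructor
  · rintro ⟨_, h1, h2⟩
    rw [hNF, Set.Finite.mem_toFinset]
    exact ⟨h1, h2⟩
  · intro ht
    have htmem : t ∈ {t | actb S e x t = true ∧ lA S e x t < av} := by
      rwa [hNF, Set.Finite.mem_toFinset] at ht
    have htlt : t < s := by
      by_contra hc
      push_neg at hc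
      exact hbig ⟨t, ht, hc⟩
    exact ⟨htlt, htmem.1, htmem.2⟩

theorem K3 {v n v' n' : ℕ} (h : (SF S e x v n).Infinite) (h' : (SF S e x v' n').Infinite) :
    v = v' ∧ n = n' := by
  classical
  -- first: not v < v'
  have haux : ∀ {a b a' b' : ℕ}, (SF S e x a b).Infinite → (SF S e x a' b').Infinite →
      a < a' → False := by
    intro a b a' b' ha ha' hlt
    have hDa : (Dv S e x a).Infinite := ha.mono (fun s hs => ⟨hs.1, hs.2.1⟩)
    obtain ⟨F, hFsub, hFfin, hFcard⟩ := hDa.exists_subset_ncard_eq (b' + 1)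
    obtain ⟨Bd, hBd⟩ := hFfin.bddAbove
    obtain ⟨s, hsmem, hsgt⟩ := ha'.exists_gt Bd
    have hcard : hFfin.toFinset ⊆ (Finset.range s).filter
        (fun t => (actb S e x t && decide (lA S e x t < lA S e x s)) = true) := by
      intro t ht
      rw [Set.Finite.mem_toFinset] at ht
      have htD := hFsub ht
      rw [Finset.mem_filter, Finset.mem_range, Bool.and_eq_true, decide_eq_true_eq]
      have : t ≤ Bd := hBd ht
      refine ⟨by omega, htD.1, ?_⟩
      rw [htD.2, hsmem.2.1]
      exact hlt
    have h1 := Finset.card_le_card hcard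
    rw [Set.ncard_eq_toFinset_card F hFfin] at hFcard
    rw [← cntF_eq] at h1
    rw [hsmem.2.2] at h1
    omega
  have hvv : v = v' := by
    rcases lt_trichotomy v v' with hlt | heq | hgt
    · exact absurd (haux h h' hlt) not_false
    · exact heq
    · exact absurd (haux h' h hgt) not_false
  subst hvv
  refine ⟨rfl, ?_⟩
  -- now n = n' by monotonicity of cntF on Dv
  obtain ⟨s, hs, _⟩ := h.exists_gt 0
  obtain ⟨s', hs', hss'⟩ := h'.exists_gt s
  obtain ⟨s'', hs'', hss''⟩ := h.exists_gt s'
  have m1 : cntF S e x s ≤ cntF S e x s' :=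
    Dv_mono_cnt S e x (v := v) ⟨hs.1, hs.2.1⟩ ⟨hs'.1, hs'.2.1⟩ (le_of_lt hss')
  have m2 : cntF S e x s' ≤ cntF S e x s'' :=
    Dv_mono_cnt S e x (v := v) ⟨hs'.1, hs'.2.1⟩ ⟨hs''.1, hs''.2.1⟩ (le_of_lt hss'')
  rw [hs.2.2, hs'.2.2, hs''.2.2] at *
  omega

end fiber

/-! ### Global analysis -/

section globalsec

variable (S : ℕ → ℕ → ℕ → ℕ → ℕ → Bool) (e : ℕ)

theorem RR_iff (m n : ℕ) : RR S e m n = true ↔ LL S e m = LL S e n := by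
  unfold RR
  exact decide_eq_true_iff

theorem RR_equiv : Equivalence (fun m n => RR S e m n = true) := by
  constructor
  · intro m; rw [RR_iff]
  · intro m n h; rw [RR_iff] at *; omega
  · intro m n k h1 h2; rw [RR_iff] at *; omega

theorem classOf_eq (a : ℕ) :
    classOf (fun m n => RR S e m n = true) a = {m | LL S e m = LL S e a} := by
  ext m
  simp only [classOf, Set.mem_setOf_eq, RR_iff]

theorem LL_act {m : ℕ} (h : actb S e m.unpair.1 m.unpair.2 = true) :
    LL S e m = Nat.pair 0 (Nat.pair m.unpair.1
      (Nat.pair (lA S e m.unpair.1 m.unpair.2) (cntF S e m.unpair.1 m.unpair.2))) := by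
  unfold LL
  rw [h]
  rfl

theorem LL_not {m : ℕ} (h : actb S e m.unpair.1 m.unpair.2 = false) :
    LL S e m = Nat.pair 1 m := by
  unfold LL
  rw [h]
  rfl

theorem classOf_act {x s : ℕ} (h : actb S e x s = true) :
    classOf (fun m n => RR S e m n = true) (Nat.pair x s) =
      (fun t => Nat.pair x t) '' SF S e x (lA S e x s) (cntF S e x s) := by
  rw [classOf_eq]
  have hL : LL S e (Nat.pair x s) = Nat.pair 0 (Nat.pair x
      (Nat.pair (lA S e x s) (cntF S e x s))) := by
    have := LL_act S e (m := Nat.pair x s) (by rwa [Nat.unpair_pair])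
    rwa [Nat.unpair_pair] at this
  ext m
  simp only [Set.mem_setOf_eq, Set.mem_image]
  constructor
  · intro hm
    rw [hL] at hm
    rcases hact : actb S e m.unpair.1 m.unpair.2 with _ | _
    · rw [LL_not S e hact] at hm
      rw [Nat.pair_eq_pair] at hm
      omega
    · rw [LL_act S e hact] at hm
      rw [Nat.pair_eq_pair] at hm
      obtain ⟨-, hm⟩ := hm
      rw [Nat.pair_eq_pair] at hm
      obtain ⟨hx, hm⟩ := hm
      rw [Nat.pair_eq_pair] at hm
      obtain ⟨hv, hn⟩ := hm
      rw [hx] at hact hv hn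
      exact ⟨m.unpair.2, ⟨hact, hv, hn⟩, by rw [← hx]; exact Nat.pair_unpair m⟩
  · rintro ⟨t, ⟨h1, h2, h3⟩, rfl⟩
    have := LL_act S e (m := Nat.pair x t) (by rwa [Nat.unpair_pair])
    rw [Nat.unpair_pair] at this
    rw [this, hL, h2, h3]

theorem classOf_not {m : ℕ} (h : actb S e m.unpair.1 m.unpair.2 = false) :
    classOf (fun m n => RR S e m n = true) m ⊆ {m} := by
  intro m' hm'
  rw [classOf_eq, Set.mem_setOf_eq, LL_not S e h] at hm'
  rcases hact : actb S e m'.unpair.1 m'.unpair.2 with _ | _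
  · rw [LL_not S e hact, Nat.pair_eq_pair] at hm'
    simp [hm'.2]
  · rw [LL_act S e hact, Nat.pair_eq_pair] at hm'
    omega

theorem pairx_injOn (x : ℕ) : Function.Injective (fun t => Nat.pair x t) := by
  intro a b hab
  simpa [Nat.pair_eq_pair] using hab

theorem infClasses_iff :
    (InfClasses (fun m n => RR S e m n = true)).Infinite ↔
      {x | ∃ c, Gd S e x c}.Infinite := by
  classical
  constructor
  · intro hinf
    by_contra hni
    rw [Set.not_infinite] at hni
    -- canonical class map
    set Φ : ℕ → Set ℕ := fun x =>
      if h : ∃ vn : ℕ × ℕ, (SF S e x vn.1 vn.2).Infinite then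
        (fun t => Nat.pair x t) '' SF S e x h.choose.1 h.choose.2
      else ∅ with hΦ
    have hsub : InfClasses (fun m n => RR S e m n = true) ⊆
        Φ '' {x | ∃ c, Gd S e x c} := by
      rintro C ⟨⟨a, rfl⟩, hCinf⟩
      rcases hact : actb S e a.unpair.1 a.unpair.2 with _ | _
      · exact absurd (Set.Finite.subset (Set.finite_singleton a) (classOf_not S e hact)) hCinf
      · have hC := classOf_act S e (x := a.unpair.1) (s := a.unpair.2) hact
        rw [Nat.pair_unpair] at hC
        set x := a.unpair.1
        have hSFinf : (SF S e x (lA S e x a.unpair.2) (cntF S e x a.unpair.2)).Infinite := by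
          apply Set.Infinite.of_image (fun t => Nat.pair x t)
          rwa [← hC]
        have hvn : ∃ vn : ℕ × ℕ, (SF S e x vn.1 vn.2).Infinite :=
          ⟨(lA S e x a.unpair.2, cntF S e x a.unpair.2), hSFinf⟩
        have huniq := K3 S e x hvn.choose_spec hSFinf
        refine ⟨x, ⟨lA S e x a.unpair.2, K1 S e x hSFinf⟩, ?_⟩
        rw [hΦ]
        simp only [dif_pos hvn]
        rw [hC, huniq.1, huniq.2]
    exact absurd (Set.Finite.subset (hni.image Φ) hsub) hinf
  · intro hinf
    by_contra hni
    rw [Set.not_infinite] at hni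
    have hsub : {x | ∃ c, Gd S e x c} ⊆
        (fun C : Set ℕ => (sInf C).unpair.1) '' InfClasses (fun m n => RR S e m n = true) := by
      intro x hx
      obtain ⟨v, n, hSF⟩ := K2 S e x hx
      obtain ⟨s₀, hs₀⟩ := hSF.nonempty
      have hact : actb S e x s₀ = true := hs₀.1
      have hC : classOf (fun m n => RR S e m n = true) (Nat.pair x s₀) =
          (fun t => Nat.pair x t) '' SF S e x v n := by
        rw [classOf_act S e hact, hs₀.2.1, hs₀.2.2]
      have hCinf : (classOf (fun m n => RR S e m n = true) (Nat.pair x s₀)).Infinite := by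
        rw [hC]
        exact hSF.image (Set.injOn_of_injective (pairx_injOn x))
      refine ⟨classOf (fun m n => RR S e m n = true) (Nat.pair x s₀),
        ⟨⟨Nat.pair x s₀, rfl⟩, hCinf⟩, ?_⟩
      show (sInf (classOf (fun m n => RR S e m n = true) (Nat.pair x s₀))).unpair.1 = x
      rw [hC]
      have hmem := Nat.sInf_mem ((hSF.image (Set.injOn_of_injective (pairx_injOn x))).nonempty)
      obtain ⟨t, _, ht⟩ := hmem
      rw [← ht, Nat.unpair_pair]
    exact absurd (Set.Finite.subset (hni.image _) hsub) hinf

theorem P_infinite_iff :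
    {x | ∃ c, Gd S e x c}.Infinite ↔ ∀ x, ∃ y, ∀ u, ∃ v, S x y u v e = true := by
  constructor
  · intro h x
    obtain ⟨x₀, hx₀, hxx₀⟩ := h.exists_gt x
    obtain ⟨c, hc⟩ := hx₀
    exact ⟨wI x c, fun u => hc x (le_of_lt hxx₀) u⟩
  · intro h
    have : {x | ∃ c, Gd S e x c} = Set.univ := by
      rw [Set.eq_univ_iff_forall]
      intro x
      classical
      set l : List ℕ := (List.range (x + 1)).map (fun x' => (h x').choose) with hl
      refine ⟨cOf l, ?_⟩
      intro x' hx' u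
      have hlen : x' < l.length := by
        rw [hl, List.length_map, List.length_range]
        omega
      have hwI : wI x' (cOf l) = l.getD x' 0 := wI_cOf l x' hlen
      have hget : l.getD x' 0 = (h x').choose := by
        rw [hl]
        rw [List.getD_eq_getElem _ _ hlen]
        rw [List.getElem_map, List.getElem_range]
      rw [hwI, hget]
      exact (h x').choose_spec u
    rw [this]
    exact Set.infinite_univ

end globalsec

end Stmt15Aux

/-- Π⁰₄-hardness construction: for every total computable predicate `S` there is a
uniformly computable family `(R_e)` of equivalence relations with infinitely many
infinite classes iff `∀x ∃y ∀u ∃v, S x y u v e`. -/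
theorem stmt15 (S : ℕ → ℕ → ℕ → ℕ → ℕ → Bool)
    (hS : Computable
      (fun q : ℕ × ℕ × ℕ × ℕ × ℕ => S q.1 q.2.1 q.2.2.1 q.2.2.2.1 q.2.2.2.2)) :
    ∃ R : ℕ → ℕ → ℕ → Bool,
      Computable (fun p : ℕ × ℕ × ℕ => R p.1 p.2.1 p.2.2) ∧
      (∀ e, Equivalence (fun x y => R e x y = true)) ∧
      (∀ e, (InfClasses (fun x y => R e x y = true)).Infinite ↔
        ∀ x, ∃ y, ∀ u, ∃ v, S x y u v e = true) := by
  refine ⟨Stmt15Aux.RR S, Stmt15Aux.RR_comp hS, fun e => Stmt15Aux.RR_equiv S e, fun e => ?_⟩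
  exact (Stmt15Aux.infClasses_iff S e).trans (Stmt15Aux.P_infinite_iff S e)
end
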